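/- arXiv:1509.03997 — 5 statements merged into one kernel-verified Lean document; each statement's English description precedes it below -/
import Mathlib

section
/- Let S be a self-adjoint operator on a Hilbert space H with spectral measure F_S, and let h ∈ C_c^∞(ℝ) be nonnegative with support in [-1,1] and ∫ h = 1. For t ≥ 1 and 0 < ε < 1 set h_t(t') = t^{-ε} h(t^{-ε}(t'-t)). Then the operators ∫ h_t(t') e^{i t' S} dt' converge strongly, as t → ∞, to the spectral projection F_S({0}) onto the kernel of S. -/
open MeasureTheory Filter Topology

/-- **Time-averaged Mean Ergodic Theorem.**
Let `U t = e^{itS}` be the strongly continuous one-parameter unitary group generated by a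
self-adjoint operator `S`, and let `K` be the closed subspace of `U`-invariant vectors
(i.e. the range of the spectral projection `F_S({0})` onto the kernel of `S`).
Let `h ∈ C_c^∞(ℝ)` be nonnegative, supported in `[-1,1]`, with `∫ h = 1`, and for `t ≥ 1`,
`0 < ε < 1` set `h_t(t') = t^{-ε} h(t^{-ε}(t'-t))`.  Then for every `x`, the averages
`∫ h_t(t') U(t') x dt'` converge, as `t → ∞`, to the orthogonal projection of `x` onto `K`. -/
theorem mean_ergodic_time_average
    {H : Type*} [NormedAddCommGroup H] [InnerProductSpace ℂ H] [CompleteSpace H]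
    (U : ℝ → H →L[ℂ] H)
    (hU0 : U 0 = 1)
    (hUadd : ∀ s t : ℝ, U (s + t) = (U s).comp (U t))
    (hUiso : ∀ (t : ℝ) (x : H), ‖U t x‖ = ‖x‖)
    (hUcont : ∀ x : H, Continuous fun t : ℝ => U t x)
    (K : Submodule ℂ H) (hKclosed : IsClosed (K : Set H))
    (hK : ∀ x : H, x ∈ K ↔ ∀ t : ℝ, U t x = x)
    (h : ℝ → ℝ) (hsmooth : ContDiff ℝ (⊤ : ℕ∞) h) (hpos : ∀ s, 0 ≤ h s)
    (hsupp : Function.support h ⊆ Set.Icc (-1 : ℝ) 1)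
    (hnorm : (∫ s : ℝ, h s) = 1)
    (ε : ℝ) (hε0 : 0 < ε) (hε1 : ε < 1)
    (x : H) :
    ∃ L : H, L ∈ K ∧ x - L ∈ Kᗮ ∧
      Tendsto
        (fun t : ℝ => ∫ t' : ℝ, (t ^ (-ε) * h (t ^ (-ε) * (t' - t))) • U t' x)
        atTop (𝓝 L) := by
  classical
  haveI : CompleteSpace K := hKclosed.completeSpace_coe
  -- Basic group facts
  have hUapp : ∀ (s t' : ℝ) (v : H), U s (U t' v) = U (s + t') v := by
    intro s t' v; rw [hUadd s t']; rfl
  have hUinv : ∀ (s : ℝ) (v : H), U s (U (-s) v) = v := by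
    intro s v; rw [hUapp, add_neg_cancel, hU0]; rfl
  -- linear isometries
  let Uli : ℝ → H →ₗᵢ[ℂ] H := fun s => ⟨(U s : H →ₗ[ℂ] H), hUiso s⟩
  have hUli : ∀ (s : ℝ) (v : H), Uli s v = U s v := fun _ _ => rfl
  -- facts about h
  have hzero : ∀ u : ℝ, u ∉ Set.Icc (-1 : ℝ) 1 → h u = 0 := by
    intro u hu; by_contra hne; exact hu (hsupp hne)
  have hcont : Continuous h := hsmooth.continuous
  have hdiff : Differentiable ℝ h := hsmooth.differentiable (by simp)
  have hHCS : HasCompactSupport h := HasCompactSupport.intro isCompact_Icc hzero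
  obtain ⟨M, hM⟩ := (hHCS.deriv).exists_bound_of_continuous
    (hsmooth.continuous_deriv (by simp))
  have hM0 : 0 ≤ M := le_trans (norm_nonneg _) (hM 0)
  have hLip : ∀ a b : ℝ, |h a - h b| ≤ M * |a - b| := by
    intro a b
    have := Convex.norm_image_sub_le_of_norm_deriv_le (f := h) (s := Set.univ)
      (fun y _ => hdiff y) (fun y _ => hM y) convex_univ
      (Set.mem_univ b) (Set.mem_univ a)
    simpa [Real.norm_eq_abs] using this
  -- the scaling factor
  set c : ℝ → ℝ := fun t => t ^ (-ε) with hc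
  have hc_pos : ∀ t : ℝ, 1 ≤ t → 0 < c t := fun t ht =>
    Real.rpow_pos_of_pos (by linarith) _
  have hc_le1 : ∀ t : ℝ, 1 ≤ t → c t ≤ 1 := fun t ht =>
    Real.rpow_le_one_of_one_le_of_nonpos ht (by linarith)
  have hc_to0 : Tendsto c atTop (𝓝 0) := tendsto_rpow_neg_atTop hε0
  -- integrability of the averaged integrand
  have hint : ∀ (v : H) (b r : ℝ), 0 < r →
      Integrable (fun t' => (r * h (r * (t' - b))) • U t' v) volume := by
    intro v b r hr
    apply Continuous.integrable_of_hasCompactSupport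
    · exact (continuous_const.mul (hcont.comp
        (continuous_const.mul (continuous_id.sub continuous_const)))).smul (hUcont v)
    · apply HasCompactSupport.intro (isCompact_Icc (a := b - r⁻¹) (b := b + r⁻¹))
      intro t' ht'
      have h0 : h (r * (t' - b)) = 0 := by
        apply hzero
        intro hmem
        rcases hmem with ⟨h1, h2⟩
        apply ht'
        constructor
        · nlinarith [mul_le_mul_of_nonneg_left h1 (inv_pos.2 hr).le,
            inv_mul_cancel₀ hr.ne', (inv_pos.2 hr).le]
        · nlinarith [mul_le_mul_of_nonneg_left h2 (inv_pos.2 hr).le,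
            inv_mul_cancel₀ hr.ne', (inv_pos.2 hr).le]
      simp [h0]
  -- total mass one: a general change-of-variables identity
  have hCOV : ∀ (f : ℝ → ℝ) (t r : ℝ), 0 < r →
      (∫ t' : ℝ, r * f (r * (t' - t))) = ∫ u : ℝ, f u := by
    intro f t r hr
    have e1 : (∫ t' : ℝ, r * f (r * (t' - t))) = ∫ u : ℝ, r * f (r * u) :=
      integral_sub_right_eq_self (fun u => r * f (r * u)) t
    rw [e1, integral_const_mul, MeasureTheory.Measure.integral_comp_mul_left f r,
      abs_of_pos (inv_pos.2 hr), smul_eq_mul, ← mul_assoc, mul_inv_cancel₀ hr.ne',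
      one_mul]
  have hmass : ∀ t : ℝ, 1 ≤ t → (∫ t' : ℝ, c t * h (c t * (t' - t))) = 1 := by
    intro t ht
    rw [hCOV h t (c t) (hc_pos t ht), hnorm]
  -- the averaging operator fixes K pointwise
  have hAK : ∀ (y : H), y ∈ K → ∀ t : ℝ, 1 ≤ t →
      (∫ t' : ℝ, (c t * h (c t * (t' - t))) • U t' y) = y := by
    intro y hy t ht
    have hy' : ∀ t' : ℝ, U t' y = y := (hK y).1 hy
    calc (∫ t' : ℝ, (c t * h (c t * (t' - t))) • U t' y)
        = ∫ t' : ℝ, (c t * h (c t * (t' - t))) • y := by simp_rw [hy']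
      _ = (∫ t' : ℝ, c t * h (c t * (t' - t))) • y := integral_smul_const _ _
      _ = y := by rw [hmass t ht, one_smul]
  -- contraction
  have hcontr : ∀ (v : H) (t : ℝ), 1 ≤ t →
      ‖∫ t' : ℝ, (c t * h (c t * (t' - t))) • U t' v‖ ≤ ‖v‖ := by
    intro v t ht
    have hcpos := hc_pos t ht
    calc ‖∫ t' : ℝ, (c t * h (c t * (t' - t))) • U t' v‖
        ≤ ∫ t' : ℝ, ‖(c t * h (c t * (t' - t))) • U t' v‖ :=
          norm_integral_le_integral_norm _
      _ = ∫ t' : ℝ, (c t * h (c t * (t' - t))) * ‖v‖ := by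
          congr 1; funext t'
          rw [norm_smul, Real.norm_eq_abs,
            abs_of_nonneg (mul_nonneg hcpos.le (hpos _)), hUiso]
      _ = (∫ t' : ℝ, c t * h (c t * (t' - t))) * ‖v‖ := integral_mul_const _ _
      _ = ‖v‖ := by rw [hmass t ht, one_mul]
  -- decomposition of x
  obtain ⟨L, hLK, z, hzK, hxz⟩ := K.exists_add_mem_mem_orthogonal x
  refine ⟨L, hLK, by rw [hxz]; simpa using hzK, ?_⟩
  -- the set of differences and its span
  set Dset : Set H := {v | ∃ s : ℝ, ∃ w : H, U s w - w = v} with hDset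
  set D : Submodule ℂ H := Submodule.span ℂ Dset with hD
  -- K is the orthogonal complement of D
  have hKD : K = Dᗮ := by
    ext y
    rw [Submodule.mem_orthogonal]
    constructor
    · intro hy v hv
      refine Submodule.span_induction
        (p := fun v _ => (inner ℂ v y : ℂ) = 0) ?_ ?_ ?_ ?_ hv
      · rintro v ⟨s, w, rfl⟩
        have hy' : U (-s) y = y := (hK y).1 hy (-s)
        have e1 : (inner ℂ (U s w) y : ℂ) = inner ℂ w (U (-s) y) := by
          conv_lhs => rw [← hUinv s y]
          exact (Uli s).inner_map_map w (U (-s) y)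
        rw [inner_sub_left, e1, hy', sub_self]
      · exact inner_zero_left y
      · intro a b _ _ ha hb; rw [inner_add_left, ha, hb, add_zero]
      · intro a v _ hv'; rw [inner_smul_left, hv', mul_zero]
    · intro hy
      rw [hK]
      intro t
      have key : ∀ w : H, (inner ℂ w (U t y - y) : ℂ) = 0 := by
        intro w
        have h1 : (inner ℂ (U (-t) w - w) y : ℂ) = 0 :=
          hy _ (Submodule.subset_span ⟨-t, w, rfl⟩)
        have e1 : (inner ℂ (U (-t) w) y : ℂ) = inner ℂ w (U t y) := by
          have := (Uli t).inner_map_map (U (-t) w) y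
          rw [hUli, hUli, hUinv t w] at this
          exact this.symm
        rw [inner_sub_left, e1] at h1
        rw [inner_sub_right]
        linear_combination h1
      have := key (U t y - y)
      rw [inner_self_eq_zero] at this
      exact sub_eq_zero.1 this
  have hzcl : z ∈ closure (D : Set H) := by
    have : (Kᗮ : Set H) = closure (D : Set H) := by
      rw [hKD, Submodule.orthogonal_orthogonal_eq_closure]
      exact Submodule.topologicalClosure_coe D
    rw [← this]; exact hzK
  -- convergence to zero on generators
  have hgen : ∀ (s : ℝ) (w : H),
      Tendsto (fun t => ∫ t' : ℝ, (c t * h (c t * (t' - t))) • U t' (U s w - w))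
        atTop (𝓝 0) := by
    intro s w
    have hbound : ∀ t : ℝ, 1 ≤ t →
        ‖∫ t' : ℝ, (c t * h (c t * (t' - t))) • U t' (U s w - w)‖ ≤
          (M * |s| * (2 + 2 * |s|) * ‖w‖) * c t := by
      intro t ht
      have hcpos := hc_pos t ht
      have hc1 := hc_le1 t ht
      set F : ℝ → H := fun u => (c t * h (c t * (u - (s + t)))) • U u w with hF
      set G : ℝ → H := fun u => (c t * h (c t * (u - t))) • U u w with hG
      have hFint : Integrable F := hint w (s + t) (c t) hcpos
      have hGint : Integrable G := hint w t (c t) hcpos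
      -- rewrite the average of the difference
      have e1 : (∫ t' : ℝ, (c t * h (c t * (t' - t))) • U t' (U s w - w)) =
          ∫ u : ℝ, (c t * h (c t * (u - (s + t))) - c t * h (c t * (u - t))) • U u w := by
        have ept : ∀ t' : ℝ, (c t * h (c t * (t' - t))) • U t' (U s w - w) =
            F (t' + s) - G t' := by
          intro t'
          simp only [hF, hG, map_sub, smul_sub, hUapp]
          have e : t' + s - (s + t) = t' - t := by ring
          rw [e]
        calc (∫ t' : ℝ, (c t * h (c t * (t' - t))) • U t' (U s w - w))
            = ∫ t' : ℝ, (F (t' + s) - G t') := by simp_rw [ept]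
          _ = (∫ t' : ℝ, F (t' + s)) - ∫ t' : ℝ, G t' :=
              integral_sub (hFint.comp_add_right s) hGint
          _ = (∫ u : ℝ, F u) - ∫ u : ℝ, G u := by
              rw [integral_add_right_eq_self F s]
          _ = ∫ u : ℝ, (F u - G u) := (integral_sub hFint hGint).symm
          _ = ∫ u : ℝ, (c t * h (c t * (u - (s + t))) - c t * h (c t * (u - t))) • U u w := by
              congr 1; funext u; rw [hF, hG, sub_smul]
      -- the difference kernel
      set g : ℝ → ℝ := fun v => |h (v - c t * s) - h v| with hg
      have hgcont : Continuous g :=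
        ((hcont.comp (continuous_id.sub continuous_const)).sub hcont).abs
      have hgbd : ∀ v, g v ≤ M * (c t * |s|) := by
        intro v
        have h5 := hLip (v - c t * s) v
        have e : |v - c t * s - v| = c t * |s| := by
          rw [show v - c t * s - v = -(c t * s) by ring, abs_neg, abs_mul,
            abs_of_pos hcpos]
        rw [e] at h5
        exact h5
      have hcs : c t * |s| ≤ |s| := by nlinarith [abs_nonneg s]
      have hgsupp : ∀ v : ℝ, v ∉ Set.Icc (-(1 + |s|)) (1 + |s|) → g v = 0 := by
        intro v hv
        have hv' : ¬(-(1 + |s|) ≤ v ∧ v ≤ 1 + |s|) := hv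
        push_neg at hv'
        have h1 : h v = 0 := by
          apply hzero
          intro hmem
          rcases hmem with ⟨ha, hb⟩
          rcases le_or_gt (-(1 + |s|)) v with h2 | h2
          · have := hv' h2; nlinarith [abs_nonneg s]
          · nlinarith [abs_nonneg s]
        have h2 : h (v - c t * s) = 0 := by
          apply hzero
          intro hmem
          rcases hmem with ⟨ha, hb⟩
          have h5 : |c t * s| ≤ |s| := by
            rw [abs_mul, abs_of_pos hcpos]; exact hcs
          have h6 := abs_le.1 h5
          rcases le_or_gt (-(1 + |s|)) v with h2 | h2
          · have := hv' h2; linarith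
          · linarith
        rw [hg]; simp only [h1, h2, sub_zero, abs_zero]
      -- estimate
      have e2 : ∀ u : ℝ,
          ‖(c t * h (c t * (u - (s + t))) - c t * h (c t * (u - t))) • U u w‖
            = (c t * g (c t * (u - t))) * ‖w‖ := by
        intro u
        rw [norm_smul, Real.norm_eq_abs, hUiso]
        congr 1
        have e3 : c t * (u - (s + t)) = c t * (u - t) - c t * s := by ring
        rw [hg, e3, show c t * h (c t * (u - t) - c t * s) - c t * h (c t * (u - t))
            = c t * (h (c t * (u - t) - c t * s) - h (c t * (u - t))) by ring,
          abs_mul, abs_of_pos hcpos]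
      have e4 : (∫ u : ℝ, (c t * g (c t * (u - t))) * ‖w‖) = (∫ v : ℝ, g v) * ‖w‖ := by
        rw [integral_mul_const, hCOV g t (c t) hcpos]
      have e5 : (∫ v : ℝ, g v) ≤ M * (c t * |s|) * (2 + 2 * |s|) := by
        have hsub : (∫ v : ℝ, g v) = ∫ v in Set.Icc (-(1 + |s|)) (1 + |s|), g v :=
          (setIntegral_eq_integral_of_forall_compl_eq_zero hgsupp).symm
        rw [hsub]
        have hml : volume (Set.Icc (-(1 + |s|)) (1 + |s|)) < ⊤ := measure_Icc_lt_top
        have := norm_setIntegral_le_of_norm_le_const (μ := volume)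
          (s := Set.Icc (-(1 + |s|)) (1 + |s|)) (C := M * (c t * |s|)) hml
          (fun v _ => by rw [Real.norm_eq_abs, abs_of_nonneg (abs_nonneg _)]; exact hgbd v)
        have hvol : (volume (Set.Icc (-(1 + |s|)) (1 + |s|))).toReal = 2 + 2 * |s| := by
          rw [Real.volume_Icc, ENNReal.toReal_ofReal (by nlinarith [abs_nonneg s])]
          ring
        rw [Measure.real, hvol] at this
        calc (∫ v in Set.Icc (-(1 + |s|)) (1 + |s|), g v)
            ≤ ‖∫ v in Set.Icc (-(1 + |s|)) (1 + |s|), g v‖ := le_abs_self _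
          _ ≤ M * (c t * |s|) * (2 + 2 * |s|) := this
      calc ‖∫ t' : ℝ, (c t * h (c t * (t' - t))) • U t' (U s w - w)‖
          = ‖∫ u : ℝ, (c t * h (c t * (u - (s + t))) - c t * h (c t * (u - t))) • U u w‖ := by
            rw [e1]
        _ ≤ ∫ u : ℝ, ‖(c t * h (c t * (u - (s + t))) - c t * h (c t * (u - t))) • U u w‖ :=
            norm_integral_le_integral_norm _
        _ = ∫ u : ℝ, (c t * g (c t * (u - t))) * ‖w‖ := by
            congr 1; funext u; exact e2 u
        _ = (∫ v : ℝ, g v) * ‖w‖ := e4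
        _ ≤ (M * (c t * |s|) * (2 + 2 * |s|)) * ‖w‖ := by
            apply mul_le_mul_of_nonneg_right e5 (norm_nonneg w)
        _ = (M * |s| * (2 + 2 * |s|) * ‖w‖) * c t := by ring
    apply squeeze_zero_norm' (a := fun t => (M * |s| * (2 + 2 * |s|) * ‖w‖) * c t)
    · filter_upwards [eventually_ge_atTop (1 : ℝ)] with t ht
      exact hbound t ht
    · simpa using hc_to0.const_mul (M * |s| * (2 + 2 * |s|) * ‖w‖)
  -- convergence to zero on the span
  have hQ : ∀ v ∈ D, Tendsto (fun t => ∫ t' : ℝ, (c t * h (c t * (t' - t))) • U t' v)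
      atTop (𝓝 0) := by
    intro v hv
    refine Submodule.span_induction (p := fun v _ =>
      Tendsto (fun t => ∫ t' : ℝ, (c t * h (c t * (t' - t))) • U t' v) atTop (𝓝 0))
      ?_ ?_ ?_ ?_ hv
    · rintro v ⟨s, w, rfl⟩; exact hgen s w
    · exact tendsto_const_nhds.congr fun t => by simp
    · intro a b _ _ hta htb
      have heq : (fun t => ∫ t' : ℝ, (c t * h (c t * (t' - t))) • U t' (a + b))
          =ᶠ[atTop] fun t => (∫ t' : ℝ, (c t * h (c t * (t' - t))) • U t' a) +
            ∫ t' : ℝ, (c t * h (c t * (t' - t))) • U t' b := by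
        filter_upwards [eventually_ge_atTop (1 : ℝ)] with t ht
        have hcpos := hc_pos t ht
        rw [show (fun t' : ℝ => (c t * h (c t * (t' - t))) • U t' (a + b)) =
            fun t' : ℝ => (c t * h (c t * (t' - t))) • U t' a +
              (c t * h (c t * (t' - t))) • U t' b from
          funext fun t' => by rw [map_add, smul_add]]
        exact integral_add (hint a t (c t) hcpos) (hint b t (c t) hcpos)
      have := (hta.add htb).congr' heq.symm
      simpa using this
    · intro a v _ htv
      have heq : (fun t => ∫ t' : ℝ, (c t * h (c t * (t' - t))) • U t' (a • v))
          = fun t => a • ∫ t' : ℝ, (c t * h (c t * (t' - t))) • U t' v := by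
        funext t
        rw [← integral_smul]
        congr 1; funext t'
        rw [ContinuousLinearMap.map_smul]
        exact smul_comm _ _ _
      rw [heq]
      simpa using htv.const_smul a
  -- convergence to zero on the closure of the span
  have hconv : Tendsto (fun t => ∫ t' : ℝ, (c t * h (c t * (t' - t))) • U t' z)
      atTop (𝓝 0) := by
    rw [Metric.tendsto_atTop]
    intro η hη
    obtain ⟨v, hvD, hvz⟩ : ∃ v ∈ (D : Set H), dist z v < η / 2 :=
      Metric.mem_closure_iff.1 hzcl (η / 2) (by linarith)
    obtain ⟨N, hN⟩ := Metric.tendsto_atTop.1 (hQ v hvD) (η / 2) (by linarith)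
    refine ⟨max N 1, fun t htN => ?_⟩
    have ht1 : (1 : ℝ) ≤ t := le_trans (le_max_right N 1) htN
    have htN' : N ≤ t := le_trans (le_max_left N 1) htN
    have hcpos := hc_pos t ht1
    have esplit : (∫ t' : ℝ, (c t * h (c t * (t' - t))) • U t' z) =
        (∫ t' : ℝ, (c t * h (c t * (t' - t))) • U t' (z - v)) +
          ∫ t' : ℝ, (c t * h (c t * (t' - t))) • U t' v := by
      rw [show (fun t' : ℝ => (c t * h (c t * (t' - t))) • U t' z) =
          fun t' : ℝ => (c t * h (c t * (t' - t))) • U t' (z - v) +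
            (c t * h (c t * (t' - t))) • U t' v from
        funext fun t' => by rw [← smul_add, ← map_add, sub_add_cancel]]
      exact integral_add (hint (z - v) t (c t) hcpos) (hint v t (c t) hcpos)
    rw [dist_zero_right, esplit]
    calc ‖(∫ t' : ℝ, (c t * h (c t * (t' - t))) • U t' (z - v)) +
          ∫ t' : ℝ, (c t * h (c t * (t' - t))) • U t' v‖
        ≤ ‖∫ t' : ℝ, (c t * h (c t * (t' - t))) • U t' (z - v)‖ +
          ‖∫ t' : ℝ, (c t * h (c t * (t' - t))) • U t' v‖ := norm_add_le _ _
      _ ≤ ‖z - v‖ + ‖∫ t' : ℝ, (c t * h (c t * (t' - t))) • U t' v‖ := by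
          have := hcontr (z - v) t ht1
          linarith
      _ < η / 2 + η / 2 := by
          have h1 : ‖z - v‖ < η / 2 := by rw [← dist_eq_norm]; exact hvz
          have h2 := hN t htN'
          rw [dist_zero_right] at h2
          linarith
      _ = η := by ring
  -- final assembly
  have heq : (fun t : ℝ => ∫ t' : ℝ, (c t * h (c t * (t' - t))) • U t' x)
      =ᶠ[atTop] fun t => L + ∫ t' : ℝ, (c t * h (c t * (t' - t))) • U t' z := by
    filter_upwards [eventually_ge_atTop (1 : ℝ)] with t ht
    have hcpos := hc_pos t ht
    rw [hxz]
    rw [show (fun t' : ℝ => (c t * h (c t * (t' - t))) • U t' (L + z)) =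
        fun t' : ℝ => (c t * h (c t * (t' - t))) • U t' L +
          (c t * h (c t * (t' - t))) • U t' z from
      funext fun t' => by rw [map_add, smul_add]]
    rw [integral_add (hint L t (c t) hcpos) (hint z t (c t) hcpos), hAK L hLK t ht]
  have := (tendsto_const_nhds (x := L) (f := atTop (α := ℝ))).add hconv
  rw [add_zero] at this
  exact this.congr' heq.symm
end

section
/- Let H be a self-adjoint operator, ℓ ≥ 1 an integer, and A a bounded operator such that all iterated commutators ad_H^k(A) (k = 0,…,ℓ), defined recursively as quadratic forms, extend to bounded operators. Then as quadratic forms on D(H^ℓ) × D(H^ℓ): [(1+H)^ℓ, A] = Σ_{k=1}^{ℓ} binom(ℓ,k) ad_H^k(A) (1+H)^{ℓ-k}, and consequently A = (1+H)^{-ℓ} Σ_{k=0}^{ℓ} binom(ℓ,k) (-i)^k A^{(k)} (1+H)^{ℓ-k} on D(H^ℓ), where A^{(k)} = i^k ad_H^k(A) is the k-th derivative of s ↦ e^{isH}Ae^{-isH} at s=0 (assumed to exist in norm and be bounded). -/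
noncomputable section

local notation "⟪" x ", " y "⟫" => @inner ℂ _ _ x y

/-- The domain `D(H^ℓ)` of the `ℓ`-th power of an operator with domain `dom` and
action `Hf`: `D(H⁰) = H` and `D(H^{k+1}) = {x ∈ D(H) : Hx ∈ D(H^k)}`. -/
def Dpow {H : Type*} [AddCommGroup H] [Module ℂ H]
    (dom : Set H) (Hf : H →ₗ[ℂ] H) : ℕ → Set H
  | 0 => Set.univ
  | (k + 1) => {x | x ∈ dom ∧ Hf x ∈ Dpow dom Hf k}

section Aux

variable {H : Type*} [AddCommGroup H] [Module ℂ H] (p : Submodule ℂ H) (Hf : H →ₗ[ℂ] H)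

lemma Dpow_add : ∀ (n : ℕ) (x y : H), x ∈ Dpow (p : Set H) Hf n →
    y ∈ Dpow (p : Set H) Hf n → x + y ∈ Dpow (p : Set H) Hf n
  | 0, _, _, _, _ => trivial
  | (n + 1), x, y, hx, hy =>
    ⟨p.add_mem hx.1 hy.1, by
      rw [map_add]; exact Dpow_add n _ _ hx.2 hy.2⟩

lemma Dpow_anti : ∀ (n : ℕ) (x : H), x ∈ Dpow (p : Set H) Hf (n + 1) →
    x ∈ Dpow (p : Set H) Hf n
  | 0, _, _ => trivial
  | (n + 1), x, hx => ⟨hx.1, Dpow_anti n _ hx.2⟩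

lemma Dpow_S (n : ℕ) (x : H) (hx : x ∈ Dpow (p : Set H) Hf (n + 1)) :
    (1 + Hf : Module.End ℂ H) x ∈ Dpow (p : Set H) Hf n := by
  have : (1 + Hf : Module.End ℂ H) x = x + Hf x := rfl
  rw [this]
  exact Dpow_add p Hf n _ _ (Dpow_anti p Hf n x hx) hx.2

lemma Dpow_Spow : ∀ (j n : ℕ) (x : H), x ∈ Dpow (p : Set H) Hf (n + j) →
    ((1 + Hf : Module.End ℂ H) ^ j) x ∈ Dpow (p : Set H) Hf n
  | 0, n, x, hx => by simpa using hx
  | (j + 1), n, x, hx => by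
    rw [pow_succ, Module.End.mul_apply]
    exact Dpow_Spow j n _ (Dpow_S p Hf (n + j) x hx)

end Aux

/-- Pascal's rule for the binomial sums appearing in the commutator expansion. -/
lemma pascal_sum (f : ℕ → ℂ) (n : ℕ) :
    f 1 + (∑ k ∈ Finset.Icc 1 n, (n.choose k : ℂ) * f k)
      + ∑ k ∈ Finset.Icc 1 n, (n.choose k : ℂ) * f (k + 1)
    = ∑ k ∈ Finset.Icc 1 (n + 1), ((n + 1).choose k : ℂ) * f k := by
  have h1 : ∀ (g : ℕ → ℂ) (N : ℕ),
      ∑ k ∈ Finset.Icc 1 N, g k = ∑ i ∈ Finset.range N, g (i + 1) := by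
    intro g N
    rw [← Finset.Ico_add_one_right_eq_Icc, Finset.sum_Ico_eq_sum_range]
    simp [add_comm]
  rw [h1, h1, h1]
  simp only [Nat.choose_succ_succ, Nat.cast_add, add_mul, Finset.sum_add_distrib]
  rw [Finset.sum_range_succ' (fun i => (n.choose i : ℂ) * f (i + 1)) n,
    Finset.sum_range_succ (fun i => (n.choose (i + 1) : ℂ) * f (i + 1)) n]
  simp [Nat.choose_succ_self]
  ring

/-- **Commutator expansion for `(1+H)^ℓ`.**
Let `H` be self-adjoint (represented by the self-adjoint `LinearPMap` `T` together with a
linear extension `Hext` of its action), `ℓ ≥ 1`, and let `A` be a bounded operator such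
that all iterated commutators `ad_H^k(A)` (`k = 0,…,ℓ`), defined recursively as quadratic
forms on `D(H) × D(H)`, extend to bounded operators `B k` (with `B 0 = A`); equivalently
the derivatives `A^{(k)} = ∂ₛᵏ e^{isH}Ae^{-isH}|_{s=0} = iᵏ ad_H^k(A)` exist in norm and
are bounded.  Then as quadratic forms on `D(H^ℓ) × D(H^ℓ)`:
`[(1+H)^ℓ, A] = Σ_{k=1}^{ℓ} (ℓ choose k) ad_H^k(A) (1+H)^{ℓ-k}`,
and consequently, with `R = (1+H)^{-ℓ}`,
`A = (1+H)^{-ℓ} Σ_{k=0}^{ℓ} (ℓ choose k) (-i)^k A^{(k)} (1+H)^{ℓ-k}` on `D(H^ℓ)`. -/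
theorem commutator_expansion
    {H : Type*} [NormedAddCommGroup H] [InnerProductSpace ℂ H] [CompleteSpace H]
    (T : H →ₗ.[ℂ] H) (hTsa : IsSelfAdjoint T)
    (Hext : H →ₗ[ℂ] H) (hext : ∀ x : T.domain, Hext x = T x)
    (ℓ : ℕ) (hℓ : 1 ≤ ℓ)
    (A : H →L[ℂ] H)
    (B : ℕ → (H →L[ℂ] H)) (hB0 : B 0 = (A : H →ₗ[ℂ] H))
    (hBrec : ∀ k : ℕ, ∀ x ∈ T.domain, ∀ y ∈ T.domain,
      ⟪x, B (k + 1) y⟫ = ⟪Hext x, B k y⟫ - ⟪x, B k (Hext y)⟫)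
    (Aderiv : ℕ → (H →L[ℂ] H))
    (hAderiv : ∀ k, Aderiv k = (Complex.I ^ k) • B k)
    (R : H →L[ℂ] H) (hRsa : IsSelfAdjoint R)
    (hRmem : ∀ z : H, R z ∈ Dpow (T.domain : Set H) Hext ℓ)
    (hRright : ∀ z : H, (((1 + Hext : Module.End ℂ H) ^ ℓ)) (R z) = z)
    (hRleft : ∀ x ∈ Dpow (T.domain : Set H) Hext ℓ,
      R ((((1 + Hext : Module.End ℂ H) ^ ℓ)) x) = x) :
    (∀ x ∈ Dpow (T.domain : Set H) Hext ℓ, ∀ y ∈ Dpow (T.domain : Set H) Hext ℓ,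
      ⟪(((1 + Hext : Module.End ℂ H) ^ ℓ)) x, A y⟫
          - ⟪x, A ((((1 + Hext : Module.End ℂ H) ^ ℓ)) y)⟫
        = ∑ k ∈ Finset.Icc 1 ℓ,
            (ℓ.choose k : ℂ) * ⟪x, (B k) ((((1 + Hext : Module.End ℂ H) ^ (ℓ - k))) y)⟫) ∧
    (∀ y ∈ Dpow (T.domain : Set H) Hext ℓ,
      A y = R (∑ k ∈ Finset.range (ℓ + 1),
        ((ℓ.choose k : ℂ) * (-Complex.I) ^ k) •
          (Aderiv k) ((((1 + Hext : Module.End ℂ H) ^ (ℓ - k))) y))) := by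
  set S : Module.End ℂ H := 1 + Hext with hS
  have hB0' : ∀ z : H, B 0 z = A z := fun z => by
    have : (B 0 : H →ₗ[ℂ] H) z = (A : H →ₗ[ℂ] H) z := by rw [hB0]
    exact this
  -- The key quadratic-form identity, by induction on the power.
  have key : ∀ n : ℕ, ∀ m : ℕ, ∀ x ∈ Dpow (T.domain : Set H) Hext n,
      ∀ y ∈ Dpow (T.domain : Set H) Hext n,
      ⟪(S ^ n) x, B m y⟫ = ⟪x, B m ((S ^ n) y)⟫
        + ∑ k ∈ Finset.Icc 1 n, (n.choose k : ℂ) * ⟪x, B (m + k) ((S ^ (n - k)) y)⟫ := by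
    intro n
    induction n with
    | zero => intro m x hx y hy; simp
    | succ n ih =>
      intro m x hx y hy
      have hxd : x ∈ T.domain := hx.1
      have hyd : y ∈ T.domain := hy.1
      have hxn : x ∈ Dpow (T.domain : Set H) Hext n := Dpow_anti T.domain Hext n x hx
      have hyn : y ∈ Dpow (T.domain : Set H) Hext n := Dpow_anti T.domain Hext n y hy
      have hSy : S y ∈ Dpow (T.domain : Set H) Hext n := Dpow_S T.domain Hext n y hy
      have hSnx_dom : (S ^ n) x ∈ T.domain := by
        have := Dpow_Spow T.domain Hext n 1 x (by rwa [add_comm])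
        exact this.1
      have e1 : (S ^ (n + 1)) x = (S ^ n) x + Hext ((S ^ n) x) := by
        rw [pow_succ', Module.End.mul_apply]; rfl
      have e2 : ∀ z : H, (S ^ n) (S z) = (S ^ (n + 1)) z := fun z => by
        rw [pow_succ, Module.End.mul_apply]
      have e3 : ∀ z : H, S z = z + Hext z := fun z => rfl
      have hcomm : ⟪Hext ((S ^ n) x), B m y⟫
          = ⟪(S ^ n) x, B (m + 1) y⟫ + ⟪(S ^ n) x, B m (Hext y)⟫ := by
        have h := hBrec m ((S ^ n) x) hSnx_dom y hyd
        linear_combination -h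
      have step1 : ⟪(S ^ (n + 1)) x, B m y⟫
          = ⟪(S ^ n) x, B m (S y)⟫ + ⟪(S ^ n) x, B (m + 1) y⟫ := by
        rw [e1, inner_add_left, hcomm, e3 y, map_add, inner_add_right]
        ring
      rw [step1, ih m x hxn (S y) hSy, ih (m + 1) x hxn y hyn]
      -- rewrite the sums in terms of `f k = ⟪x, B (m+k) ((S^(n+1-k)) y)⟫`
      set f : ℕ → ℂ := fun k => ⟪x, B (m + k) ((S ^ (n + 1 - k)) y)⟫ with hf
      have hsum1 : ∑ k ∈ Finset.Icc 1 n, (n.choose k : ℂ) * ⟪x, B (m + k) ((S ^ (n - k)) (S y))⟫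
          = ∑ k ∈ Finset.Icc 1 n, (n.choose k : ℂ) * f k := by
        refine Finset.sum_congr rfl fun k hk => ?_
        have hkn : k ≤ n := (Finset.mem_Icc.mp hk).2
        have : (S ^ (n - k)) (S y) = (S ^ (n + 1 - k)) y := by
          rw [Nat.succ_sub hkn, pow_succ, Module.End.mul_apply]
        rw [this]
      have hsum2 : ∑ k ∈ Finset.Icc 1 n, (n.choose k : ℂ) * ⟪x, B (m + 1 + k) ((S ^ (n - k)) y)⟫
          = ∑ k ∈ Finset.Icc 1 n, (n.choose k : ℂ) * f (k + 1) := by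
        refine Finset.sum_congr rfl fun k hk => ?_
        have h1 : m + 1 + k = m + (k + 1) := by omega
        have h2 : n - k = n + 1 - (k + 1) := by omega
        rw [h1, h2]
      have hf1 : ⟪x, B (m + 1) ((S ^ n) y)⟫ = f 1 := by
        simp only [hf, Nat.add_sub_cancel]
      rw [hsum1, hsum2, e2 y, hf1]
      have hmain := pascal_sum f n
      have hgoal : ∑ k ∈ Finset.Icc 1 (n + 1), ((n + 1).choose k : ℂ)
            * ⟪x, B (m + k) ((S ^ (n + 1 - k)) y)⟫
          = ∑ k ∈ Finset.Icc 1 (n + 1), ((n + 1).choose k : ℂ) * f k := rfl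
      rw [hgoal]
      linear_combination hmain
  -- Part 1
  have part1 : ∀ x ∈ Dpow (T.domain : Set H) Hext ℓ, ∀ y ∈ Dpow (T.domain : Set H) Hext ℓ,
      ⟪(S ^ ℓ) x, A y⟫ - ⟪x, A ((S ^ ℓ) y)⟫
        = ∑ k ∈ Finset.Icc 1 ℓ, (ℓ.choose k : ℂ) * ⟪x, (B k) ((S ^ (ℓ - k)) y)⟫ := by
    intro x hx y hy
    have h := key ℓ 0 x hx y hy
    simp only [zero_add, hB0'] at h
    linear_combination h
  refine ⟨part1, ?_⟩
  -- Part 2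
  intro y hy
  have hterm : ∀ k z, ((ℓ.choose k : ℂ) * (-Complex.I) ^ k) • (Aderiv k) z
      = (ℓ.choose k : ℂ) • (B k) z := by
    intro k z
    rw [hAderiv k]
    have : ((-Complex.I) ^ k) * (Complex.I ^ k) = 1 := by
      rw [← mul_pow]
      simp [neg_mul, Complex.I_mul_I]
    simp only [ContinuousLinearMap.smul_apply, smul_smul]
    rw [mul_assoc, this, mul_one]
  have hw : (∑ k ∈ Finset.range (ℓ + 1),
        ((ℓ.choose k : ℂ) * (-Complex.I) ^ k) • (Aderiv k) ((S ^ (ℓ - k)) y))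
      = ∑ k ∈ Finset.range (ℓ + 1), (ℓ.choose k : ℂ) • (B k) ((S ^ (ℓ - k)) y) := by
    exact Finset.sum_congr rfl fun k _ => hterm k _
  rw [hw]
  refine ext_inner_left ℂ fun x => ?_
  rw [← hRsa.adjoint_eq, ContinuousLinearMap.adjoint_inner_right]
  rw [inner_sum]
  simp only [inner_smul_right]
  -- split off the k = 0 term
  have hRx := hRmem x
  have h1 := part1 (R x) hRx y hy
  have hsplit : ∑ k ∈ Finset.range (ℓ + 1), (ℓ.choose k : ℂ) * ⟪R x, (B k) ((S ^ (ℓ - k)) y)⟫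
      = ⟪R x, A ((S ^ ℓ) y)⟫
        + ∑ k ∈ Finset.Icc 1 ℓ, (ℓ.choose k : ℂ) * ⟪R x, (B k) ((S ^ (ℓ - k)) y)⟫ := by
    rw [Finset.sum_range_succ' (fun k => (ℓ.choose k : ℂ) * ⟪R x, (B k) ((S ^ (ℓ - k)) y)⟫) ℓ]
    have hIcc : ∀ (g : ℕ → ℂ) (N : ℕ),
        ∑ k ∈ Finset.Icc 1 N, g k = ∑ i ∈ Finset.range N, g (i + 1) := by
      intro g N
      rw [← Finset.Ico_add_one_right_eq_Icc, Finset.sum_Ico_eq_sum_range]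
      simp [add_comm]
    rw [hIcc (fun k => (ℓ.choose k : ℂ) * ⟪R x, (B k) ((S ^ (ℓ - k)) y)⟫) ℓ]
    simp [hB0']
    ring
  rw [hsplit]
  have hSRx : ⟪(S ^ ℓ) (R x), A y⟫ = ⟪x, A y⟫ := by rw [hRright x]
  linear_combination h1 - hSRx
end
end

section
/- Let H be a self-adjoint operator on a Hilbert space and set D_H = ∩_{n≥1} D(Hⁿ). Let [1,∞) ∋ t ↦ A_t ∈ B(H) be a family of bounded operators such that: (i) sup_t ‖A_t(1+H)^{-1}‖ < ∞ and sup_t ‖A_t^{(1)}(1+H)^{-1}‖ < ∞, where A_t^{(1)} = i[H,A_t] is assumed bounded; (ii) A_t Φ and A_t^{(1)} Φ converge as t → ∞ for all Φ in a dense subspace D. Then lim_{t→∞} A_t Ψ exists for every Ψ ∈ D_H. -/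
open Filter Topology

noncomputable section

local notation "⟪" x ", " y "⟫" => @inner ℂ _ _ x y

/-!
With `R = (1 + H)⁻¹`, the relation `A¹ = i[H, A]` reads `R A = A R + i R A¹ R`. Hence `R A_t` is
uniformly bounded, and since it converges on the dense set `D`, it converges strongly on all
of `H`. For `Ψ = R² w` and `Q = (a + R²)⁻¹` (`a > 0`) split `A_t Ψ = Q R (R A_t Ψ) + a Q A_t Ψ`.
The first term converges. Commuting `Q` through `A_t` costs only commutators `[R², A_t]`,
which are controlled by the uniform bounds on `A_t R` and `A¹_t R`; this shows that the second
term is `O(√a)` uniformly in `t`. Letting `a → 0` gives the Cauchy property of `A_t Ψ`.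
-/

theorem exists_tendsto_of_forall_eventually_dist_le {ι α : Type*} [PseudoMetricSpace α]
    [CompleteSpace α] {l : Filter ι} [l.NeBot] {u : ι → α}
    (h : ∀ ε > 0, ∃ v : ι → α, (∃ a, Tendsto v l (𝓝 a)) ∧ ∀ᶠ i in l, dist (u i) (v i) ≤ ε) :
    ∃ a, Tendsto u l (𝓝 a) := by
  refine cauchy_map_iff_exists_tendsto.mp (Metric.cauchy_iff.mpr ⟨inferInstance, fun ε hε => ?_⟩)
  obtain ⟨v, ⟨a, hv⟩, huv⟩ := h (ε / 4) (by positivity)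
  refine ⟨u '' {i | dist (u i) (v i) ≤ ε / 4 ∧ dist (v i) a < ε / 4},
    image_mem_map (huv.and (Metric.tendsto_nhds.mp hv _ (by positivity))), ?_⟩
  rintro _ ⟨i, ⟨hui, hvi⟩, rfl⟩ _ ⟨j, ⟨huj, hvj⟩, rfl⟩
  have hij : dist (u i) (u j) ≤ dist (u i) (v i) + dist (v i) (v j) + dist (v j) (u j) :=
    dist_triangle4 _ _ _ _
  have hv : dist (v i) (v j) ≤ dist (v i) a + dist (v j) a := dist_triangle_right _ _ _
  rw [dist_comm (v j)] at hij
  linarith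

theorem ContinuousLinearMap.exists_tendsto_apply_of_dense {ι 𝕜 E F : Type*}
    [NontriviallyNormedField 𝕜] [SeminormedAddCommGroup E] [NormedSpace 𝕜 E]
    [NormedAddCommGroup F] [NormedSpace 𝕜 F] [CompleteSpace F] {l : Filter ι} [l.NeBot]
    {T : ι → E →L[𝕜] F} {C : ℝ} (hT : ∀ᶠ i in l, ‖T i‖ ≤ C) {D : Set E} (hD : Dense D)
    (hconv : ∀ x ∈ D, ∃ y, Tendsto (fun i => T i x) l (𝓝 y)) (x : E) :
    ∃ y, Tendsto (fun i => T i x) l (𝓝 y) := by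
  refine exists_tendsto_of_forall_eventually_dist_le fun ε hε => ?_
  obtain ⟨z, hzD, hxz⟩ := Metric.mem_closure_iff.mp (hD x) (ε / (|C| + 1)) (by positivity)
  refine ⟨fun i => T i z, hconv z hzD, ?_⟩
  filter_upwards [hT] with i hi
  calc dist (T i x) (T i z) ≤ ‖T i‖ * dist x z := (T i).dist_le_opNorm x z
    _ ≤ (|C| + 1) * (ε / (|C| + 1)) :=
        mul_le_mul (by linarith [le_abs_self C]) hxz.le dist_nonneg (by positivity)
    _ = ε := by field_simp

theorem norm_mul_inv_add_sq_mul_le_sqrt {a : ℝ} (ha : 0 < a) (x : ℝ) :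
    ‖a * ((a + x ^ 2)⁻¹ * x)‖ ≤ √a := by
  have hpos : 0 < a + x ^ 2 := by positivity
  have hs : √a ^ 2 = a := Real.sq_sqrt ha.le
  have hs0 : 0 ≤ √a := Real.sqrt_nonneg a
  rw [Real.norm_eq_abs, abs_mul, abs_mul, abs_inv, abs_of_pos ha, abs_of_pos hpos,
    ← mul_assoc, mul_comm a, mul_assoc, inv_mul_le_iff₀ hpos, ← sq_abs x]
  nlinarith [mul_nonneg hs0 (sq_nonneg (√a - |x|)), mul_nonneg (mul_nonneg hs0 hs0) (abs_nonneg x)]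

theorem IsSelfAdjoint.exists_regularized_inverse {A : Type*} [CStarAlgebra A] {R : A}
    (hR : IsSelfAdjoint R) {a : ℝ} (ha : 0 < a) :
    ∃ Q : A, Commute Q R ∧ (a : ℂ) • Q + Q * R * R = 1 ∧
      ‖(a : ℂ) • (Q * R)‖ ≤ √a ∧ ‖Q * R * R‖ ≤ 1 := by
  have hpos : ∀ x : ℝ, 0 < a + x ^ 2 := fun x => by positivity
  have hf : ContinuousOn (fun x : ℝ => (a + x ^ 2)⁻¹) (spectrum ℝ R) :=
    (continuous_const.add (continuous_pow 2) |>.inv₀ fun x => (hpos x).ne').continuousOn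
  have hQ : cfc (fun x : ℝ => a * (a + x ^ 2)⁻¹) R =
      (a : ℂ) • cfc (fun x : ℝ => (a + x ^ 2)⁻¹) R := by
    rw [cfc_const_mul _ _ R hf, RCLike.real_smul_eq_coe_smul (K := ℂ)]
    rfl
  have hQR : cfc (fun x : ℝ => a * ((a + x ^ 2)⁻¹ * x)) R =
      (a : ℂ) • (cfc (fun x : ℝ => (a + x ^ 2)⁻¹) R * R) := by
    rw [cfc_const_mul .., cfc_mul _ _ R hf, cfc_id' ℝ R, RCLike.real_smul_eq_coe_smul (K := ℂ)]
    rfl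
  have hQRR : cfc (fun x : ℝ => (a + x ^ 2)⁻¹ * x * x) R =
      cfc (fun x : ℝ => (a + x ^ 2)⁻¹) R * R * R := by
    rw [cfc_mul .., cfc_mul _ _ R hf, cfc_id' ℝ R]
  refine ⟨cfc (fun x : ℝ => (a + x ^ 2)⁻¹) R, (Commute.refl R).cfc_real _, ?_, ?_, ?_⟩
  · rw [← hQ, ← hQRR, ← cfc_add .., ← cfc_one ℝ R]
    refine cfc_congr fun x _ => ?_
    field_simp [(hpos x).ne']
    simp
  · rw [← hQR]
    exact norm_cfc_le (Real.sqrt_nonneg a) fun x _ => norm_mul_inv_add_sq_mul_le_sqrt ha x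
  · rw [← hQRR]
    refine norm_cfc_le zero_le_one fun x _ => ?_
    rw [mul_assoc, ← sq, inv_mul_eq_div, Real.norm_of_nonneg (by positivity)]
    exact div_le_one_of_le₀ (by linarith) (hpos x).le

section Commutator

open Complex

variable {A : Type*} {R X Y Q : A} {c : ℂ}

theorem smul_mul_mul_mul_eq_of_commutator [Ring A] [Algebra ℂ A]
    (hXY : R * X = X * R + I • (R * Y * R)) (hQ : c • Q + Q * R * R = 1) (hQR : Commute Q R) :
    c • (Q * X * R * R) = X * R * (c • (Q * R)) - I • (c • (Q * R) * (Y * R) * (R * (Q * R * R)))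
      - I • (Q * R * R * (Y * R) * (c • (Q * R) * R)) := by
  set S := c • (1 : A) + R * R
  have hQS : Q * S = 1 := by
    rw [← hQ, mul_add, mul_smul_comm, mul_one, mul_assoc]
  have hSQ : S * Q = 1 := by
    rw [← hQ, add_mul, smul_mul_assoc, one_mul, mul_assoc, hQR.symm.eq, ← mul_assoc, hQR.eq]
  have hSX : S * X - X * S = I • (R * Y * R * R + R * R * Y * R) := by
    have hRRX : R * R * X = X * R * R + I • (R * Y * R * R + R * R * Y * R) := by
      rw [mul_assoc, hXY, mul_add, ← mul_assoc, hXY]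
      simp only [add_mul, mul_smul_comm, smul_mul_assoc, smul_add, mul_assoc]
      abel
    simp only [S, add_mul, mul_add, smul_mul_assoc, mul_smul_comm, one_mul, mul_one, ← mul_assoc,
      hRRX]
    abel
  have hQX : Q * X = X * Q - Q * (S * X - X * S) * Q := by
    calc Q * X = Q * X * (S * Q) := by rw [hSQ, mul_one]
      _ = X * Q - Q * (S * X - X * S) * Q + (Q * S) * X * Q - X * Q := by noncomm_ring
      _ = X * Q - Q * (S * X - X * S) * Q := by rw [hQS, one_mul]; abel
  have hXQ : X * Q * R * R = X * R * (Q * R) := by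
    rw [mul_assoc X Q R]
    conv_lhs => rw [hQR.eq]
    simp only [mul_assoc]
  rw [hQX, hSX, sub_mul, sub_mul, smul_sub, hXQ]
  noncomm_ring
  module

theorem norm_smul_mul_mul_mul_le_of_commutator [NormedRing A] [NormedAlgebra ℂ A]
    (hXY : R * X = X * R + I • (R * Y * R)) (hQ : c • Q + Q * R * R = 1) (hQR : Commute Q R)
    {b C : ℝ} (hcQR : ‖c • (Q * R)‖ ≤ b) (hQRR : ‖Q * R * R‖ ≤ 1) (hX : ‖X * R‖ ≤ C)
    (hY : ‖Y * R‖ ≤ C) :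
    ‖c • (Q * X * R * R)‖ ≤ b * C * (1 + 2 * ‖R‖) := by
  have hb : 0 ≤ b := (norm_nonneg _).trans hcQR
  have hC : 0 ≤ C := (norm_nonneg _).trans hX
  have h₁ : ‖X * R * (c • (Q * R))‖ ≤ C * b :=
    (norm_mul_le _ _).trans (mul_le_mul hX hcQR (norm_nonneg _) hC)
  have h₂ : ‖c • (Q * R) * (Y * R) * (R * (Q * R * R))‖ ≤ b * C * (‖R‖ * 1) :=
    norm_mul₃_le.trans (by gcongr; exact (norm_mul_le _ _).trans (by gcongr))
  have h₃ : ‖Q * R * R * (Y * R) * (c • (Q * R) * R)‖ ≤ 1 * C * (b * ‖R‖) :=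
    norm_mul₃_le.trans (by gcongr; exact norm_mul_le _ _ |>.trans (by gcongr))
  rw [smul_mul_mul_mul_eq_of_commutator hXY hQ hQR]
  refine (norm_sub_le _ _).trans ((add_le_add (norm_sub_le _ _) le_rfl).trans ?_)
  simp only [norm_smul, norm_I, one_mul]
  linarith

end Commutator

section Hilbert

variable {E : Type*} [NormedAddCommGroup E] [InnerProductSpace ℂ E] [CompleteSpace E]

theorem isSelfAdjoint_of_rightInverse {T : E →ₗ.[ℂ] E} (hT : IsSelfAdjoint T)
    {Hext : E →ₗ[ℂ] E} (hext : ∀ x : T.domain, Hext x = T x) {R : E →L[ℂ] E}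
    (hRmem : ∀ z, R z ∈ T.domain) (hR : ∀ z, R z + Hext (R z) = z) : IsSelfAdjoint R := by
  have hsymm := LinearPMap.adjoint_isFormalAdjoint hT.dense_domain
  rw [LinearPMap.isSelfAdjoint_def.mp hT] at hsymm
  refine LinearMap.IsSymmetric.isSelfAdjoint fun z w => ?_
  have hH : ⟪Hext (R z), R w⟫ = ⟪R z, Hext (R w)⟫ := by
    have h := hsymm ⟨R z, hRmem z⟩ ⟨R w, hRmem w⟩
    rwa [← hext, ← hext] at h
  calc ⟪R z, w⟫ = ⟪R z, R w⟫ + ⟪R z, Hext (R w)⟫ := by rw [← inner_add_right, hR]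
    _ = ⟪z, R w⟫ := by rw [← hH, ← inner_add_left, hR]

theorem mul_eq_of_inner_commutator {Hext : E →ₗ[ℂ] E} {R A A₁ : E →L[ℂ] E}
    (hR : IsSelfAdjoint R) (hRH : ∀ z, R z + Hext (R z) = z)
    (hcomm : ∀ z w, ⟪R z, A₁ (R w)⟫ =
      Complex.I * (⟪Hext (R z), A (R w)⟫ - ⟪R z, A (Hext (R w))⟫)) :
    R * A = A * R + Complex.I • (R * A₁ * R) := by
  ext w
  refine ext_inner_left ℂ fun z => ?_
  have hRs : ∀ x y, ⟪R x, y⟫ = ⟪x, R y⟫ := hR.isSymmetric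
  have hHR : ∀ v, Hext (R v) = v - R v := fun v => eq_sub_of_add_eq' (hRH v)
  have h := hcomm z w
  rw [hHR, hHR] at h
  simp only [mul_apply_eq_comp, add_apply, smul_apply, inner_add_right, inner_smul_right]
  rw [← hRs, ← hRs, h, map_sub, inner_sub_left, inner_sub_right]
  linear_combination (⟪R z, A w⟫ - ⟪z, A (R w)⟫) * Complex.I_mul_I

theorem exists_tendsto_apply_of_commutator {ι : Type*} {l : Filter ι} [l.NeBot] {R : E →L[ℂ] E}
    (hR : IsSelfAdjoint R) {X Y : ι → E →L[ℂ] E}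
    (hXY : ∀ i, R * X i = X i * R + Complex.I • (R * Y i * R)) {C : ℝ}
    (hbd : ∀ᶠ i in l, ‖X i * R‖ ≤ C ∧ ‖Y i * R‖ ≤ C) {D : Set E} (hD : Dense D)
    (hconv : ∀ x ∈ D, ∃ y, Tendsto (fun i => X i x) l (𝓝 y)) (w : E) :
    ∃ y, Tendsto (fun i => X i (R (R w))) l (𝓝 y) := by
  have hC : 0 ≤ C := hbd.exists.elim fun _ hi => (norm_nonneg _).trans hi.1
  have hRX : ∀ x, ∃ y, Tendsto (fun i => (R * X i) x) l (𝓝 y) := by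
    refine ContinuousLinearMap.exists_tendsto_apply_of_dense (C := C + ‖R‖ * C) ?_ hD
      fun x hx => ?_
    · filter_upwards [hbd] with i ⟨hX, hY⟩
      rw [hXY, mul_assoc R]
      refine (norm_add_le _ _).trans ?_
      rw [norm_smul, Complex.norm_I, one_mul]
      gcongr
      exact (norm_mul_le _ _).trans (by gcongr)
    · obtain ⟨y, hy⟩ := hconv x hx
      exact ⟨R y, (R.continuous.tendsto y).comp hy⟩
  refine exists_tendsto_of_forall_eventually_dist_le fun ε hε => ?_
  set K := C * (1 + 2 * ‖R‖) * ‖w‖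
  set δ := ε / (K + 1)
  have hδ : 0 < δ := by positivity
  obtain ⟨Q, hQR, hQ, hcQR, hQRR⟩ := hR.exists_regularized_inverse (a := δ ^ 2) (by positivity)
  rw [Real.sqrt_sq hδ.le] at hcQR
  obtain ⟨y, hy⟩ := hRX (R (R w))
  refine ⟨fun i => (Q * R) ((R * X i) (R (R w))),
    ⟨(Q * R) y, ((Q * R).continuous.tendsto y).comp hy⟩, ?_⟩
  filter_upwards [hbd] with i ⟨hX, hY⟩
  have hsplit : X i (R (R w)) - (Q * R) ((R * X i) (R (R w))) =
      (((δ ^ 2 : ℝ) : ℂ) • (Q * X i * R * R)) w := by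
    have h := DFunLike.congr_fun hQ (X i (R (R w)))
    simp only [add_apply, smul_apply, mul_apply_eq_comp, one_apply_eq_self] at h ⊢
    nth_rewrite 1 [← h]
    abel
  rw [dist_eq_norm, hsplit]
  calc _ ≤ δ * C * (1 + 2 * ‖R‖) * ‖w‖ := (ContinuousLinearMap.le_opNorm _ _).trans <|
        by gcongr; exact norm_smul_mul_mul_mul_le_of_commutator (hXY i) hQ hQR hcQR hQRR hX hY
    _ = ε * (K / (K + 1)) := by ring
    _ ≤ ε := mul_le_of_le_one_right hε.le <| (div_le_one (by positivity)).mpr (by linarith)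

end Hilbert

/-- **Existence of asymptotic limits on the smooth domain.**
Let `H` be self-adjoint (represented by the self-adjoint `LinearPMap` `T` with linear
extension `Hext` of its action and resolvent `R = (1+H)^{-1}`), and let
`t ↦ A_t` be a family of bounded operators such that (i) `sup_t ‖A_t(1+H)^{-1}‖ < ∞` and
`sup_t ‖A_t^{(1)}(1+H)^{-1}‖ < ∞`, where `A_t^{(1)} = i[H, A_t]` is assumed bounded, and
(ii) `A_tΦ` and `A_t^{(1)}Φ` converge as `t → ∞` for all `Φ` in a dense subspace `D`.
Then `lim_{t→∞} A_tΨ` exists for every `Ψ ∈ D_H = ∩ₙ D(Hⁿ)`. -/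
theorem asymptotic_limit_on_smooth_domain
    {H : Type*} [NormedAddCommGroup H] [InnerProductSpace ℂ H] [CompleteSpace H]
    (T : H →ₗ.[ℂ] H) (hTsa : IsSelfAdjoint T)
    (Hext : H →ₗ[ℂ] H) (hext : ∀ x : T.domain, Hext x = T x)
    (R : H →L[ℂ] H)
    (hRmem : ∀ z : H, R z ∈ T.domain)
    (hRright : ∀ z : H, R z + Hext (R z) = z)
    (hRleft : ∀ x ∈ T.domain, R (x + Hext x) = x)
    (A A1 : ℝ → (H →L[ℂ] H))
    (hA1comm : ∀ t : ℝ, ∀ x ∈ T.domain, ∀ y ∈ T.domain,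
      ⟪x, A1 t y⟫ = Complex.I * (⟪Hext x, A t y⟫ - ⟪x, A t (Hext y)⟫))
    (hbound : ∃ C : ℝ, ∀ t : ℝ, 1 ≤ t →
      ‖(A t).comp R‖ ≤ C ∧ ‖(A1 t).comp R‖ ≤ C)
    (D : Set H) (hD : Dense D)
    (hconv : ∀ Φ ∈ D,
      (∃ L : H, Tendsto (fun t : ℝ => A t Φ) atTop (𝓝 L)) ∧
      (∃ L : H, Tendsto (fun t : ℝ => A1 t Φ) atTop (𝓝 L))) :
    ∀ Ψ ∈ ⋂ n : ℕ, Dpow (T.domain : Set H) Hext n,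
      ∃ L : H, Tendsto (fun t : ℝ => A t Ψ) atTop (𝓝 L) := by
  intro Ψ hΨ
  obtain ⟨C, hC⟩ := hbound
  have hR : IsSelfAdjoint R := isSelfAdjoint_of_rightInverse hTsa hext hRmem hRright
  obtain ⟨hΨdom, hHΨdom, -⟩ : Ψ ∈ Dpow (T.domain : Set H) Hext 2 := Set.mem_iInter.mp hΨ 2
  have hΨ : R (R ((Ψ + Hext Ψ) + Hext (Ψ + Hext Ψ))) = Ψ := by
    rw [hRleft _ (T.domain.add_mem hΨdom hHΨdom), hRleft _ hΨdom]
  rw [← hΨ]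
  exact exists_tendsto_apply_of_commutator hR
    (fun t => mul_eq_of_inner_commutator hR hRright fun z w => hA1comm t _ (hRmem z) _ (hRmem w))
    (eventually_atTop.mpr ⟨1, hC⟩) hD (fun x hx => (hconv x hx).1) _

end
end

section
/- Let H be self-adjoint, D_H = ∩ₙ D(Hⁿ), and let A¹, …, Aⁿ be admissible propagation observables: each t ↦ Aⁱ_t ∈ B(H) together with its adjoints and all iterated commutator derivatives (Aⁱ_t)^{(k)} = ∂ₛᵏ e^{isH}Aⁱ_t e^{-isH}|_{s=0} is bounded, uniformly bounded relative to (1+H), and strongly convergent on dense domains as t → ∞; write Aⁱ'ᵒᵘᵗ for the limit on D_H, which maps D_H into D_H. Then for every Ψ ∈ D_H, A¹ᵒᵘᵗ ⋯ Aⁿᵒᵘᵗ Ψ = lim_{t→∞} A¹_t ⋯ Aⁿ_t Ψ. -/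
open Filter Topology

noncomputable section

local notation "⟪" x ", " y "⟫" => @inner ℂ _ _ x y

theorem Dpow_sub {H : Type*} [AddCommGroup H] [Module ℂ H]
    (dom : Submodule ℂ H) (Hf : H →ₗ[ℂ] H) :
    ∀ (n : ℕ) (x y : H), x ∈ Dpow (dom : Set H) Hf n → y ∈ Dpow (dom : Set H) Hf n →
      x - y ∈ Dpow (dom : Set H) Hf n
  | 0, x, y, _, _ => trivial
  | (n+1), x, y, hx, hy =>
    ⟨sub_mem hx.1 hy.1, by rw [map_sub]; exact Dpow_sub dom Hf n _ _ hx.2 hy.2⟩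

theorem Dpow_smul {H : Type*} [AddCommGroup H] [Module ℂ H]
    (dom : Submodule ℂ H) (Hf : H →ₗ[ℂ] H) :
    ∀ (n : ℕ) (c : ℂ) (x : H), x ∈ Dpow (dom : Set H) Hf n →
      c • x ∈ Dpow (dom : Set H) Hf n
  | 0, _, _, _ => trivial
  | (n+1), c, x, hx =>
    ⟨Submodule.smul_mem _ c hx.1, by rw [map_smul]; exact Dpow_smul dom Hf n c _ hx.2⟩

theorem Dpow_mono {H : Type*} [AddCommGroup H] [Module ℂ H]
    (dom : Submodule ℂ H) (Hf : H →ₗ[ℂ] H) :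
    ∀ (n : ℕ) (x : H), x ∈ Dpow (dom : Set H) Hf (n+1) → x ∈ Dpow (dom : Set H) Hf n
  | 0, _, _ => trivial
  | (n+1), x, hx => ⟨hx.1, Dpow_mono dom Hf n _ hx.2⟩

/-- A family of operators, uniformly bounded for `t ≥ 1` and strongly convergent on a
dense set, converges strongly everywhere. -/
theorem dense_conv {E F : Type*} [NormedAddCommGroup E] [NormedAddCommGroup F]
    [NormedSpace ℂ E] [NormedSpace ℂ F] [CompleteSpace F]
    (G : ℝ → E →L[ℂ] F) {C : ℝ} (hC : ∀ t : ℝ, 1 ≤ t → ‖G t‖ ≤ C)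
    {D : Set E} (hD : Dense D)
    (hc : ∀ z ∈ D, ∃ L, Tendsto (fun t : ℝ => G t z) atTop (𝓝 L)) (z : E) :
    ∃ L, Tendsto (fun t : ℝ => G t z) atTop (𝓝 L) := by
  have hC0 : 0 ≤ C := le_trans (norm_nonneg _) (hC 1 le_rfl)
  apply cauchySeq_tendsto_of_complete
  rw [Metric.cauchySeq_iff]
  intro ε hε
  obtain ⟨z', hz'D, hz'⟩ := Metric.mem_closure_iff.mp (hD z) (ε / (4 * (C + 1)))
    (by positivity)
  obtain ⟨L', hL'⟩ := hc z' hz'D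
  have hcs := hL'.cauchySeq
  rw [Metric.cauchySeq_iff] at hcs
  obtain ⟨T0, hT0⟩ := hcs (ε / 2) (by linarith)
  refine ⟨max T0 1, fun s hs t ht => ?_⟩
  have key : ∀ u : ℝ, max T0 1 ≤ u → dist (G u z) (G u z') < ε / 4 := by
    intro u hu
    have h1 : (1 : ℝ) ≤ u := le_trans (le_max_right _ _) hu
    have h2 : dist (G u z) (G u z') = ‖G u (z - z')‖ := by
      rw [dist_eq_norm, ← map_sub]
    rw [h2]
    calc ‖G u (z - z')‖ ≤ ‖G u‖ * ‖z - z'‖ := (G u).le_opNorm _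
      _ ≤ C * ‖z - z'‖ := mul_le_mul_of_nonneg_right (hC u h1) (norm_nonneg _)
      _ ≤ (C + 1) * ‖z - z'‖ := by nlinarith [norm_nonneg (z - z')]
      _ < (C + 1) * (ε / (4 * (C + 1))) := by
          apply mul_lt_mul_of_pos_left _ (by linarith)
          rwa [← dist_eq_norm]
      _ = ε / 4 := by field_simp
  calc dist (G s z) (G t z)
      ≤ dist (G s z) (G s z') + dist (G s z') (G t z') + dist (G t z') (G t z) :=
        dist_triangle4 _ _ _ _
    _ < ε / 4 + ε / 2 + ε / 4 := by
        apply add_lt_add (add_lt_add (key s hs) ?_) ?_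
        · exact hT0 s (le_trans (le_max_left _ _) hs) t (le_trans (le_max_left _ _) ht)
        · rw [dist_comm]; exact key t ht
    _ = ε := by ring

/-- **Products of admissible propagation observables converge on the smooth domain.**
Let `H` be self-adjoint (represented by the `LinearPMap` `T`, a linear extension `Hext`
of its action, and the resolvent `R = (1+H)^{-1}`), `D_H = ∩ₙ D(Hⁿ)`, and let
`A¹,…,A^N` be admissible propagation observables: each `t ↦ Aⁱ_t`, encoded together with
its commutator derivatives `Aᵢₖ(t) = (Aⁱ_t)^{(k)}` (so `(Aⁱ)^{(k+1)} = i[H,(Aⁱ)^{(k)}]`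
as quadratic forms on `D(H)`), is such that `Aᵢₖ(t)` and its adjoint are uniformly
bounded relative to `(1+H)` and strongly convergent on dense domains as `t → ∞`; let
`Aⁱᵒᵘᵗ` denote the limit of `Aⁱ_t` on `D_H`, which maps `D_H` into `D_H`.  Then for all
`Ψ ∈ D_H`: `A¹ᵒᵘᵗ ⋯ A^Nᵒᵘᵗ Ψ = lim_{t→∞} A¹_t ⋯ A^N_t Ψ`. -/
theorem product_of_admissible_observables
    {H : Type*} [NormedAddCommGroup H] [InnerProductSpace ℂ H] [CompleteSpace H]
    (T : H →ₗ.[ℂ] H) (hTsa : IsSelfAdjoint T)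
    (Hext : H →ₗ[ℂ] H) (hext : ∀ x : T.domain, Hext x = T x)
    (R : H →L[ℂ] H)
    (hRmem : ∀ z : H, R z ∈ T.domain)
    (hRright : ∀ z : H, R z + Hext (R z) = z)
    (hRleft : ∀ x ∈ T.domain, R (x + Hext x) = x)
    (N : ℕ)
    (A : Fin N → ℕ → ℝ → (H →L[ℂ] H))
    (hrec : ∀ (i : Fin N) (k : ℕ) (t : ℝ), ∀ x ∈ T.domain, ∀ y ∈ T.domain,
      ⟪x, A i (k + 1) t y⟫
        = Complex.I * (⟪Hext x, A i k t y⟫ - ⟪x, A i k t (Hext y)⟫))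
    (hbound : ∀ (i : Fin N) (k : ℕ), ∃ C : ℝ, ∀ t : ℝ, 1 ≤ t →
      ‖(A i k t).comp R‖ ≤ C ∧
      ‖(ContinuousLinearMap.adjoint (A i k t)).comp R‖ ≤ C)
    (hconv : ∀ (i : Fin N) (k : ℕ), ∃ D : Set H, Dense D ∧
      ∀ Φ ∈ D, ∃ L : H, Tendsto (fun t : ℝ => A i k t Φ) atTop (𝓝 L))
    (hconvAdj : ∀ (i : Fin N) (k : ℕ), ∃ D : Set H, Dense D ∧
      ∀ Φ ∈ D, ∃ L : H,
        Tendsto (fun t : ℝ => (ContinuousLinearMap.adjoint (A i k t)) Φ) atTop (𝓝 L))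
    (Aout : Fin N → H → H)
    (hAout : ∀ i : Fin N, ∀ Ψ ∈ ⋂ n : ℕ, Dpow (T.domain : Set H) Hext n,
      Tendsto (fun t : ℝ => A i 0 t Ψ) atTop (𝓝 (Aout i Ψ)))
    (hAoutInv : ∀ i : Fin N, ∀ Ψ ∈ ⋂ n : ℕ, Dpow (T.domain : Set H) Hext n,
      Aout i Ψ ∈ ⋂ n : ℕ, Dpow (T.domain : Set H) Hext n) :
    ∀ Ψ ∈ ⋂ n : ℕ, Dpow (T.domain : Set H) Hext n,
      Tendsto
        (fun t : ℝ => (List.ofFn (fun i : Fin N => (A i 0 t : H → H))).foldr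
          (fun B v => B v) Ψ)
        atTop
        (𝓝 ((List.ofFn Aout).foldr (fun B v => B v) Ψ)) := by
  classical
  set DH : Set H := ⋂ n : ℕ, Dpow (T.domain : Set H) Hext n with hDHdef
  -- membership facts for `DH`
  have hDHdom : ∀ {x : H}, x ∈ DH → x ∈ T.domain := fun hx => (Set.mem_iInter.mp hx 1).1
  have hDHH : ∀ {x : H}, x ∈ DH → Hext x ∈ DH := fun hx =>
    Set.mem_iInter.2 fun n => (Set.mem_iInter.mp hx (n + 1)).2
  -- symmetry of `T` (via `Hext`)
  have hsymm : ∀ x ∈ T.domain, ∀ y ∈ T.domain, ⟪Hext x, y⟫ = ⟪x, Hext y⟫ := by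
    have hdense := hTsa.dense_domain
    have hsym0 : T.IsFormalAdjoint T := by
      have h := LinearPMap.adjoint_isFormalAdjoint hdense
      have heq : T.adjoint = T := hTsa
      rwa [heq] at h
    intro x hx y hy
    have h := hsym0 ⟨x, hx⟩ ⟨y, hy⟩
    rw [← hext ⟨x, hx⟩, ← hext ⟨y, hy⟩] at h
    exact h
  -- `R` is self-adjoint
  have hRsa : ∀ x y : H, ⟪R x, y⟫ = ⟪x, R y⟫ := by
    intro x y
    calc ⟪R x, y⟫ = ⟪R x, R y + Hext (R y)⟫ := by rw [hRright]
      _ = ⟪R x, R y⟫ + ⟪R x, Hext (R y)⟫ := inner_add_right _ _ _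
      _ = ⟪R x, R y⟫ + ⟪Hext (R x), R y⟫ := by
            rw [hsymm _ (hRmem x) _ (hRmem y)]
      _ = ⟪R x + Hext (R x), R y⟫ := (inner_add_left _ _ _).symm
      _ = ⟪x, R y⟫ := by rw [hRright]
  have hRadj : ContinuousLinearMap.adjoint R = R :=
    ((ContinuousLinearMap.eq_adjoint_iff R R).mpr hRsa).symm
  have hnormR : ∀ B : H →L[ℂ] H,
      ‖R.comp B‖ = ‖(ContinuousLinearMap.adjoint B).comp R‖ := by
    intro B
    calc ‖R.comp B‖ = ‖ContinuousLinearMap.adjoint (R.comp B)‖ :=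
          (LinearIsometryEquiv.norm_map ContinuousLinearMap.adjoint _).symm
      _ = ‖(ContinuousLinearMap.adjoint B).comp (ContinuousLinearMap.adjoint R)‖ := by
          rw [ContinuousLinearMap.adjoint_comp]
      _ = _ := by rw [hRadj]
  -- the key membership criterion for the domain
  have key_mem : ∀ z w : H, (∀ x ∈ T.domain, ⟪Hext x, z⟫ = ⟪x, w⟫) →
      z ∈ T.domain ∧ Hext z = w := by
    intro z w hz
    set u : H := R (z + w) with hu
    have hum : u ∈ T.domain := hRmem _
    have huu : u + Hext u = z + w := hRright _
    have horth : ∀ v : H, ⟪v, z⟫ = ⟪v, u⟫ := by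
      intro v
      have hx : R v ∈ T.domain := hRmem v
      have hxv : R v + Hext (R v) = v := hRright v
      calc ⟪v, z⟫ = ⟪R v + Hext (R v), z⟫ := by rw [hxv]
        _ = ⟪R v, z⟫ + ⟪Hext (R v), z⟫ := inner_add_left _ _ _
        _ = ⟪R v, z⟫ + ⟪R v, w⟫ := by rw [hz _ hx]
        _ = ⟪R v, z + w⟫ := (inner_add_right _ _ _).symm
        _ = ⟪R v, u + Hext u⟫ := by rw [huu]
        _ = ⟪R v, u⟫ + ⟪R v, Hext u⟫ := inner_add_right _ _ _
        _ = ⟪R v, u⟫ + ⟪Hext (R v), u⟫ := by rw [hsymm _ hx _ hum]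
        _ = ⟪R v + Hext (R v), u⟫ := (inner_add_left _ _ _).symm
        _ = ⟪v, u⟫ := by rw [hxv]
    have hzu : z = u := by
      have h0 : ∀ v : H, ⟪v, z - u⟫ = 0 := by
        intro v; rw [inner_sub_right, horth v, sub_self]
      have := h0 (z - u)
      rw [inner_self_eq_zero] at this
      exact sub_eq_zero.mp this
    constructor
    · rw [hzu]; exact hum
    · have : z + Hext z = z + w := by rw [hzu] at huu ⊢; exact huu
      exact add_left_cancel this
  -- the commutation relation on the domain
  have hCom : ∀ (i : Fin N) (k : ℕ) (t : ℝ), ∀ y ∈ T.domain,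
      A i k t y ∈ T.domain ∧
        Hext (A i k t y) = A i k t (Hext y) - Complex.I • A i (k + 1) t y := by
    intro i k t y hy
    apply key_mem
    intro x hx
    have h := hrec i k t x hx y hy
    rw [inner_sub_right, inner_smul_right]
    linear_combination Complex.I * h +
      (⟪Hext x, A i k t y⟫ - ⟪x, A i k t (Hext y)⟫) * Complex.I_mul_I
  -- `A i k t` preserves each `Dpow` level since `Hext` is a submodule map
  have hApres : ∀ (n : ℕ) (i : Fin N) (k : ℕ) (t : ℝ) (y : H),
      y ∈ Dpow (T.domain : Set H) Hext n → A i k t y ∈ Dpow (T.domain : Set H) Hext n := by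
    intro n
    induction n with
    | zero => intros; trivial
    | succ n IH =>
      intro i k t y hy
      refine ⟨(hCom i k t y hy.1).1, ?_⟩
      rw [(hCom i k t y hy.1).2]
      exact Dpow_sub _ _ n _ _ (IH i k t _ hy.2)
        (Dpow_smul _ _ n _ _ (IH i (k + 1) t y (Dpow_mono _ _ n y hy)))
  have hADH : ∀ (i : Fin N) (k : ℕ) (t : ℝ) (x : H), x ∈ DH → A i k t x ∈ DH := by
    intro i k t x hx
    exact Set.mem_iInter.2 fun n => hApres n i k t x (Set.mem_iInter.mp hx n)
  -- the fundamental identity `A y = R (A (y + H y)) - i • R (A' y)` on the domain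
  have hIdent : ∀ (i : Fin N) (k : ℕ) (t : ℝ), ∀ y ∈ T.domain,
      A i k t y = R (A i k t (y + Hext y)) - Complex.I • R (A i (k + 1) t y) := by
    intro i k t y hy
    obtain ⟨hm, hH⟩ := hCom i k t y hy
    have h3 : R (A i k t y + Hext (A i k t y)) = A i k t y := hRleft _ hm
    rw [hH] at h3
    calc A i k t y
        = R (A i k t y + (A i k t (Hext y) - Complex.I • A i (k + 1) t y)) := h3.symm
      _ = R (A i k t (y + Hext y) - Complex.I • A i (k + 1) t y) := by
          congr 1; rw [map_add]; abel
      _ = R (A i k t (y + Hext y)) - Complex.I • R (A i (k + 1) t y) := by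
          rw [map_sub, map_smul]
  -- strong convergence of `R ∘ A i k t` on all of `H`
  have hQ : ∀ (i : Fin N) (k : ℕ) (z : H),
      ∃ L, Tendsto (fun t : ℝ => R (A i k t z)) atTop (𝓝 L) := by
    intro i k
    obtain ⟨C, hC⟩ := hbound i k
    obtain ⟨D, hD, hDc⟩ := hconv i k
    have hb : ∀ t : ℝ, 1 ≤ t → ‖R.comp (A i k t)‖ ≤ C := by
      intro t ht; rw [hnormR]; exact (hC t ht).2
    intro z
    exact dense_conv (fun t => R.comp (A i k t)) hb hD
      (fun z' hz' => by
        obtain ⟨L, hL⟩ := hDc z' hz'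
        exact ⟨R L, (R.continuous.tendsto L).comp hL⟩) z
  -- strong convergence of `A i k t` on the domain of `T`
  have hAc : ∀ (i : Fin N) (k : ℕ), ∀ Φ ∈ T.domain,
      ∃ L, Tendsto (fun t : ℝ => A i k t Φ) atTop (𝓝 L) := by
    intro i k Φ hΦ
    obtain ⟨L1, h1⟩ := hQ i k (Φ + Hext Φ)
    obtain ⟨L2, h2⟩ := hQ i (k + 1) Φ
    refine ⟨L1 - Complex.I • L2, ?_⟩
    have heq : (fun t : ℝ => A i k t Φ)
        = fun t => R (A i k t (Φ + Hext Φ)) - Complex.I • R (A i (k + 1) t Φ) :=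
      funext fun t => hIdent i k t Φ hΦ
    rw [heq]
    exact h1.sub (h2.const_smul _)
  -- the limit operators
  set Lf : Fin N → ℕ → H → H := fun i k Φ =>
    if h : ∃ L, Tendsto (fun t : ℝ => A i k t Φ) atTop (𝓝 L) then h.choose else 0
    with hLfdef
  have hLf : ∀ (i : Fin N) (k : ℕ), ∀ Φ ∈ T.domain,
      Tendsto (fun t : ℝ => A i k t Φ) atTop (𝓝 (Lf i k Φ)) := by
    intro i k Φ hΦ
    have h : ∃ L, Tendsto (fun t : ℝ => A i k t Φ) atTop (𝓝 L) := hAc i k Φ hΦ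
    simp only [hLfdef, dif_pos h]
    exact h.choose_spec
  have hLadd : ∀ (i : Fin N) (k : ℕ), ∀ x ∈ T.domain, ∀ y ∈ T.domain,
      Lf i k (x + y) = Lf i k x + Lf i k y := by
    intro i k x hx y hy
    have h := (hLf i k x hx).add (hLf i k y hy)
    simp only [← map_add] at h
    exact tendsto_nhds_unique (hLf i k (x + y) (add_mem hx hy)) h
  have hLmem : ∀ (i : Fin N) (k : ℕ), ∀ y : H, y ∈ T.domain → Hext y ∈ T.domain →
      Lf i k y ∈ T.domain ∧
        Hext (Lf i k y) = Lf i k (Hext y) - Complex.I • Lf i (k + 1) y := by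
    intro i k y hy hHy
    have h1 := hLf i k y hy
    have h2 := hLf i k (y + Hext y) (add_mem hy hHy)
    have h3 := hLf i (k + 1) y hy
    have heq : (fun t : ℝ => A i k t y)
        = fun t => R (A i k t (y + Hext y) - Complex.I • A i (k + 1) t y) := by
      funext t
      rw [map_sub, map_smul]
      exact hIdent i k t y hy
    rw [heq] at h1
    have h4 : Tendsto (fun t : ℝ => R (A i k t (y + Hext y) - Complex.I • A i (k + 1) t y))
        atTop (𝓝 (R (Lf i k (y + Hext y) - Complex.I • Lf i (k + 1) y))) := by
      apply (R.continuous.tendsto _).comp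
      exact h2.sub (h3.const_smul _)
    have hval : Lf i k y = R (Lf i k (y + Hext y) - Complex.I • Lf i (k + 1) y) :=
      tendsto_nhds_unique h1 h4
    constructor
    · rw [hval]; exact hRmem _
    · have h5 := hRright (Lf i k (y + Hext y) - Complex.I • Lf i (k + 1) y)
      rw [← hval] at h5
      have h6 : Hext (Lf i k y)
          = Lf i k (y + Hext y) - Complex.I • Lf i (k + 1) y - Lf i k y := by
        rw [eq_sub_iff_add_eq, add_comm]; exact h5
      rw [h6, hLadd i k y hy _ hHy]
      abel
  have hLpres : ∀ (n : ℕ) (i : Fin N) (k : ℕ), ∀ y ∈ DH,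
      Lf i k y ∈ Dpow (T.domain : Set H) Hext n := by
    intro n
    induction n with
    | zero => intros; trivial
    | succ n IH =>
      intro i k y hy
      obtain ⟨hm, hH⟩ := hLmem i k y (hDHdom hy) (hDHdom (hDHH hy))
      refine ⟨hm, ?_⟩
      rw [hH]
      exact Dpow_sub _ _ n _ _ (IH i k _ (hDHH hy))
        (Dpow_smul _ _ n _ _ (IH i (k + 1) y hy))
  have hL0 : ∀ (i : Fin N), ∀ y ∈ DH, Lf i 0 y = Aout i y := fun i y hy =>
    tendsto_nhds_unique (hLf i 0 y (hDHdom hy)) (hAout i y hy)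
  -- linearity of iterates of `Hext`
  have hIterSub : ∀ (m : ℕ) (x y : H), Hext^[m] (x - y) = Hext^[m] x - Hext^[m] y := by
    intro m x y
    simp only [← Module.End.pow_apply, map_sub]
  have hIterSmul : ∀ (m : ℕ) (c : ℂ) (x : H), Hext^[m] (c • x) = c • Hext^[m] x := by
    intro m c x
    simp only [← Module.End.pow_apply, map_smul]
  -- the main convergence engine
  have hMain : ∀ (m : ℕ) (i : Fin N) (k : ℕ) (v : ℝ → H) (Φ : H),
      (∀ t, v t ∈ DH) → Φ ∈ DH →
      (∀ m', Tendsto (fun t : ℝ => Hext^[m'] (v t)) atTop (𝓝 (Hext^[m'] Φ))) →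
      Tendsto (fun t : ℝ => Hext^[m] (A i k t (v t))) atTop
        (𝓝 (Hext^[m] (Lf i k Φ))) := by
    intro m
    induction m with
    | zero =>
      intro i k v Φ hv hΦ hcv
      simp only [Function.iterate_zero, id_eq]
      obtain ⟨C, hC⟩ := hbound i k
      have hkey : (fun t : ℝ => A i k t (v t)) = fun t =>
          A i k t Φ + ((A i k t).comp R) ((v t - Φ) + Hext (v t - Φ)) := by
        funext t
        rw [ContinuousLinearMap.comp_apply,
          hRleft _ (sub_mem (hDHdom (hv t)) (hDHdom hΦ)), map_sub]
        abel
      rw [hkey]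
      have hw : Tendsto (fun t : ℝ => (v t - Φ) + Hext (v t - Φ)) atTop (𝓝 0) := by
        have h0 : Tendsto (fun t : ℝ => v t) atTop (𝓝 Φ) := by simpa using hcv 0
        have h1 : Tendsto (fun t : ℝ => Hext (v t)) atTop (𝓝 (Hext Φ)) := by
          simpa using hcv 1
        have h2 : Tendsto (fun t : ℝ => (v t - Φ) + (Hext (v t) - Hext Φ)) atTop
            (𝓝 ((Φ - Φ) + (Hext Φ - Hext Φ))) :=
          (h0.sub tendsto_const_nhds).add (h1.sub tendsto_const_nhds)
        simp only [map_sub]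
        simpa using h2
      have hX : Tendsto (fun t : ℝ =>
          ((A i k t).comp R) ((v t - Φ) + Hext (v t - Φ))) atTop (𝓝 0) := by
        have hg : Tendsto (fun t : ℝ => C * ‖(v t - Φ) + Hext (v t - Φ)‖) atTop (𝓝 0) := by
          have := hw.norm
          rw [norm_zero] at this
          have := this.const_mul C
          rwa [mul_zero] at this
        apply squeeze_zero_norm' _ hg
        filter_upwards [eventually_ge_atTop (1 : ℝ)] with t ht
        calc ‖((A i k t).comp R) ((v t - Φ) + Hext (v t - Φ))‖
            ≤ ‖(A i k t).comp R‖ * ‖(v t - Φ) + Hext (v t - Φ)‖ :=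
              ContinuousLinearMap.le_opNorm _ _
          _ ≤ C * ‖(v t - Φ) + Hext (v t - Φ)‖ :=
              mul_le_mul_of_nonneg_right (hC t ht).1 (norm_nonneg _)
      have := (hLf i k Φ (hDHdom hΦ)).add hX
      simpa using this
    | succ m IH =>
      intro i k v Φ hv hΦ hcv
      have hkey : (fun t : ℝ => Hext^[m + 1] (A i k t (v t))) = fun t =>
          Hext^[m] (A i k t (Hext (v t))) - Complex.I • Hext^[m] (A i (k + 1) t (v t)) := by
        funext t
        rw [Function.iterate_succ_apply, (hCom i k t (v t) (hDHdom (hv t))).2,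
          hIterSub, hIterSmul]
      rw [hkey]
      have T1 := IH i k (fun t => Hext (v t)) (Hext Φ) (fun t => hDHH (hv t)) (hDHH hΦ)
        (fun m' => by
          simpa only [← Function.iterate_succ_apply] using hcv (m' + 1))
      have T2 := IH i (k + 1) v Φ hv hΦ hcv
      have T3 := T1.sub (T2.const_smul Complex.I)
      have hlim : Hext^[m + 1] (Lf i k Φ)
          = Hext^[m] (Lf i k (Hext Φ)) - Complex.I • Hext^[m] (Lf i (k + 1) Φ) := by
        rw [Function.iterate_succ_apply,
          (hLmem i k Φ (hDHdom hΦ) (hDHdom (hDHH hΦ))).2, hIterSub, hIterSmul]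
      rw [hlim]
      exact T3
  -- the product induction
  have hProd : ∀ (l : List (Fin N)) (Ψ : H), Ψ ∈ DH →
      (l.foldr (fun i v => Aout i v) Ψ ∈ DH) ∧
      (∀ t : ℝ, l.foldr (fun i v => A i 0 t v) Ψ ∈ DH) ∧
      ∀ m : ℕ, Tendsto (fun t : ℝ => Hext^[m] (l.foldr (fun i v => A i 0 t v) Ψ))
        atTop (𝓝 (Hext^[m] (l.foldr (fun i v => Aout i v) Ψ))) := by
    intro l Ψ hΨ
    induction l with
    | nil =>
      exact ⟨hΨ, fun _ => hΨ, fun m => tendsto_const_nhds⟩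
    | cons i l IH =>
      obtain ⟨hΦ, hP, hcv⟩ := IH
      refine ⟨hAoutInv i _ hΦ, fun t => hADH i 0 t _ (hP t), fun m => ?_⟩
      have h := hMain m i 0 (fun t => l.foldr (fun i v => A i 0 t v) Ψ)
        (l.foldr (fun i v => Aout i v) Ψ) hP hΦ hcv
      simp only [List.foldr_cons]
      rwa [hL0 i _ hΦ] at h
  intro Ψ hΨ
  have h := (hProd (List.finRange N) Ψ hΨ).2.2 0
  simp only [Function.iterate_zero, id_eq] at h
  simpa only [List.ofFn_eq_map, List.foldr_map] using h

end
end

section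
/- Let θ ∈ C^∞(ℝ) with 0 ≤ θ ≤ 1, supp θ ⊂ (0,∞), θ = 1 on (1,∞), and let β ∈ C_c^∞(ℝ⁴) with 0 ≤ β ≤ 1, β = 1 near 0, β(-p) = β(p). For r ≥ 1 and a future-directed timelike unit vector n set η̃_{±,r}(p) = θ(±r n_μ p^μ) β(r^{-1} p). Then for each ℓ ∈ {0,1} there is a constant c, independent of p and r, such that |∂_{p⁰}^ℓ ( (n_μ p^μ)² ∂_r η̃_{±,r}(p) )| ≤ (c/r²)(1 + |p|³) for all p ∈ ℝ⁴ and r ≥ 1. -/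
noncomputable section

abbrev E4 := EuclideanSpace ℝ (Fin 4)

/-- The Minkowski pairing `n_μ p^μ = n⁰p⁰ - 𝐧·𝐩` with the future-directed timelike unit
vector `n = (√(1+|𝐧|²), 𝐧)`. -/
def nPair (nv : Fin 3 → ℝ) (p : E4) : ℝ :=
  Real.sqrt (1 + ∑ i : Fin 3, nv i ^ 2) * p 0 - ∑ i : Fin 3, nv i * p i.succ

/-- The cutoff functions `η̃_{±,r}(p) = θ(± r n_μp^μ) β(r⁻¹ p)`; the sign `σ = ±1`. -/
def etaCut (θ : ℝ → ℝ) (β : E4 → ℝ) (nv : Fin 3 → ℝ) (σ r : ℝ) (p : E4) : ℝ :=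
  θ (σ * (r * nPair nv p)) * β (r⁻¹ • p)

/-- `(n_μp^μ)² ∂_r η̃_{±,r}(p)`. -/
def Gfun (θ : ℝ → ℝ) (β : E4 → ℝ) (nv : Fin 3 → ℝ) (σ r : ℝ) (p : E4) : ℝ :=
  nPair nv p ^ 2 * deriv (fun r' : ℝ => etaCut θ β nv σ r' p) r

/- ### Auxiliary lemmas -/

lemma coord_abs_le (p : E4) (i : Fin 4) : |p i| ≤ ‖p‖ := by
  rw [EuclideanSpace.norm_eq]
  have h1 : |p i| = Real.sqrt (‖p i‖ ^ 2) := by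
    rw [Real.norm_eq_abs, sq_abs, Real.sqrt_sq_eq_abs]
  rw [h1]
  apply Real.sqrt_le_sqrt
  exact Finset.single_le_sum (f := fun j => ‖p j‖ ^ 2) (fun j _ => by positivity)
    (Finset.mem_univ i)

lemma pow_le_aux {x : ℝ} (hx : 0 ≤ x) : x ≤ 1 + x^3 ∧ x^2 ≤ 1 + x^3 ∧ x^3 ≤ 1 + x^3 := by
  rcases le_total x 1 with h | h
  · exact ⟨by nlinarith [pow_nonneg hx 3], by nlinarith [pow_nonneg hx 3],
      by nlinarith [pow_nonneg hx 3]⟩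
  · exact ⟨by nlinarith [mul_nonneg hx hx, mul_nonneg (mul_nonneg hx hx) hx],
      by nlinarith, by nlinarith⟩

lemma nPair_shift (nv : Fin 3 → ℝ) (p : E4) (s : ℝ) :
    nPair nv (p + s • (EuclideanSpace.single 0 1 : E4))
      = nPair nv p + s * Real.sqrt (1 + ∑ i : Fin 3, nv i ^ 2) := by
  simp only [nPair, PiLp.add_apply, PiLp.smul_apply, EuclideanSpace.single_apply,
    smul_eq_mul]
  have h0 : ∀ i : Fin 3, (if (i.succ : Fin 4) = 0 then (1:ℝ) else 0) = 0 := fun i => by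
    simp [Fin.succ_ne_zero i]
  simp only [h0, if_pos rfl, mul_zero, add_zero]
  norm_num
  ring

lemma nPair_bound (nv : Fin 3 → ℝ) (p : E4) :
    |nPair nv p| ≤ (Real.sqrt (1 + ∑ i : Fin 3, nv i ^ 2) + ∑ i : Fin 3, |nv i|) * ‖p‖ := by
  set K := Real.sqrt (1 + ∑ i : Fin 3, nv i ^ 2) with hK
  have hK0 : 0 ≤ K := Real.sqrt_nonneg _
  calc |nPair nv p| ≤ |K * p 0| + |∑ i : Fin 3, nv i * p i.succ| := abs_sub _ _
    _ ≤ K * ‖p‖ + ∑ i : Fin 3, |nv i| * ‖p‖ := by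
        have h1 : |K * p 0| ≤ K * ‖p‖ := by
          rw [abs_mul, abs_of_nonneg hK0]
          exact mul_le_mul_of_nonneg_left (coord_abs_le p 0) hK0
        have h2 : |∑ i : Fin 3, nv i * p i.succ| ≤ ∑ i : Fin 3, |nv i| * ‖p‖ := by
          refine (Finset.abs_sum_le_sum_abs _ _).trans ?_
          apply Finset.sum_le_sum
          intro i _
          rw [abs_mul]
          exact mul_le_mul_of_nonneg_left (coord_abs_le p _) (abs_nonneg _)
        exact add_le_add h1 h2
    _ = (K + ∑ i : Fin 3, |nv i|) * ‖p‖ := by rw [← Finset.sum_mul]; ring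

lemma theta_flat (θ : ℝ → ℝ) (hθsupp : Function.support θ ⊆ Set.Ioi (0:ℝ))
    (hθone : ∀ s : ℝ, 1 < s → θ s = 1) {x : ℝ} (hx : x < 0 ∨ 1 < x) :
    deriv θ x = 0 ∧ deriv (deriv θ) x = 0 := by
  have hE : ∃ c : ℝ, θ =ᶠ[nhds x] fun _ => c := by
    rcases hx with hx | hx
    · refine ⟨0, ?_⟩
      filter_upwards [Iio_mem_nhds hx] with y hy
      by_contra h
      exact absurd (hθsupp h) (by simp at hy ⊢; linarith)
    · exact ⟨1, by filter_upwards [Ioi_mem_nhds hx] with y hy using hθone y hy⟩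
  obtain ⟨c, hE⟩ := hE
  constructor
  · rw [hE.deriv_eq, deriv_const]
  · rw [hE.deriv.deriv_eq]
    have : deriv (fun _ : ℝ => c) = fun _ : ℝ => 0 := funext fun y => deriv_const y c
    rw [this, deriv_const]

lemma Gfun_eq (θ : ℝ → ℝ) (hθd : Differentiable ℝ θ) (β : E4 → ℝ) (hβd : Differentiable ℝ β)
    (nv : Fin 3 → ℝ) (σ r : ℝ) (hr : r ≠ 0) (p : E4) :
    Gfun θ β nv σ r p =
      σ * nPair nv p ^ 3 * deriv θ (σ * (r * nPair nv p)) * β (r⁻¹ • p)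
      - (r ^ 2)⁻¹ * (nPair nv p ^ 2 *
          (θ (σ * (r * nPair nv p)) * fderiv ℝ β (r⁻¹ • p) p)) := by
  set N := nPair nv p with hN
  have h1 : HasDerivAt (fun r' : ℝ => σ * (r' * N)) (σ * N) r := by
    simpa using ((hasDerivAt_id r).mul_const N).const_mul σ
  have hθat : HasDerivAt θ (deriv θ (σ * (r * N))) (σ * (r * N)) := (hθd _).hasDerivAt
  have h2 : HasDerivAt (fun r' : ℝ => θ (σ * (r' * N)))
      (deriv θ (σ * (r * N)) * (σ * N)) r := hθat.comp r h1
  have h3 : HasDerivAt (fun r' : ℝ => r'⁻¹ • p) ((-(r ^ 2)⁻¹) • p) r :=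
    (hasDerivAt_inv hr).smul_const p
  have h4 : HasFDerivAt β (fderiv ℝ β (r⁻¹ • p)) (r⁻¹ • p) := (hβd _).hasFDerivAt
  have h5 : HasDerivAt (fun r' : ℝ => β (r'⁻¹ • p))
      (fderiv ℝ β (r⁻¹ • p) ((-(r ^ 2)⁻¹) • p)) r := h4.comp_hasDerivAt r h3
  have h7 : deriv (fun r' : ℝ => etaCut θ β nv σ r' p) r
      = deriv θ (σ * (r * N)) * (σ * N) * β (r⁻¹ • p)
        + θ (σ * (r * N)) * (fderiv ℝ β (r⁻¹ • p) ((-(r ^ 2)⁻¹) • p)) := by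
    have h6 : HasDerivAt (fun r' => θ (σ * (r' * N)) * β (r'⁻¹ • p)) _ r := h2.mul h5
    simpa [etaCut] using h6.deriv
  rw [Gfun, h7, map_smul, smul_eq_mul, ← hN]
  ring
set_option maxHeartbeats 2000000 in
/-- **Key estimate for asymptotic creation/annihilation approximants.**
Let `θ ∈ C^∞(ℝ)`, `0 ≤ θ ≤ 1`, `supp θ ⊂ (0,∞)`, `θ = 1` on `(1,∞)`, and
`β ∈ C_c^∞(ℝ⁴)`, `0 ≤ β ≤ 1`, `β = 1` near `0`, `β(-p) = β(p)`.  For `r ≥ 1` and a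
future-directed timelike unit vector `n` set `η̃_{±,r}(p) = θ(± r n_μp^μ) β(r⁻¹p)`.
Then for each `ℓ ∈ {0,1}` there is a constant `c`, independent of `p` and `r`, with
`|∂_{p⁰}^ℓ ((n_μp^μ)² ∂_r η̃_{±,r}(p))| ≤ (c/r²)(1+|p|³)` for all `p` and `r ≥ 1`. -/
theorem eta_derivative_bound
    (θ : ℝ → ℝ) (hθs : ContDiff ℝ (⊤ : ℕ∞) θ) (hθ01 : ∀ s, 0 ≤ θ s ∧ θ s ≤ 1)
    (hθsupp : Function.support θ ⊆ Set.Ioi (0:ℝ))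
    (hθone : ∀ s : ℝ, 1 < s → θ s = 1)
    (β : E4 → ℝ) (hβs : ContDiff ℝ (⊤ : ℕ∞) β) (hβc : HasCompactSupport β)
    (hβ01 : ∀ p, 0 ≤ β p ∧ β p ≤ 1)
    (hβone : ∃ δ : ℝ, 0 < δ ∧ ∀ p : E4, ‖p‖ < δ → β p = 1)
    (hβeven : ∀ p : E4, β (-p) = β p)
    (nv : Fin 3 → ℝ) :
    ∃ c : ℝ, ∀ σ : ℝ, (σ = 1 ∨ σ = -1) → ∀ r : ℝ, 1 ≤ r → ∀ p : E4,
      |Gfun θ β nv σ r p| ≤ c / r ^ 2 * (1 + ‖p‖ ^ 3) ∧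
      |deriv (fun s : ℝ => Gfun θ β nv σ r (p + s • EuclideanSpace.single 0 1)) 0|
        ≤ c / r ^ 2 * (1 + ‖p‖ ^ 3) := by
  -- smoothness facts
  have hθinf : ContDiff ℝ (⊤ : ℕ∞) θ := hθs.of_le (by simp)
  have hβinf : ContDiff ℝ (⊤ : ℕ∞) β := hβs.of_le (by simp)
  have hθd : Differentiable ℝ θ := hθinf.differentiable (by simp)
  have hθ's : ContDiff ℝ (⊤ : ℕ∞) (deriv θ) := (contDiff_infty_iff_deriv.mp hθinf).2
  have hθ'd : Differentiable ℝ (deriv θ) := hθ's.differentiable (by simp)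
  have hθ''c : Continuous (deriv (deriv θ)) :=
    ((contDiff_infty_iff_deriv.mp hθ's).2).continuous
  have hβd : Differentiable ℝ β := hβinf.differentiable (by simp)
  have hβ's : ContDiff ℝ (⊤ : ℕ∞) (fderiv ℝ β) := (contDiff_infty_iff_fderiv.mp hβinf).2
  have hβ'd : Differentiable ℝ (fderiv ℝ β) := hβ's.differentiable (by simp)
  have hβ''c : Continuous (fderiv ℝ (fderiv ℝ β)) :=
    ((contDiff_infty_iff_fderiv.mp hβ's).2).continuous
  -- bounds on derivatives of θ
  have hflat : ∀ x : ℝ, x < 0 ∨ 1 < x → deriv θ x = 0 ∧ deriv (deriv θ) x = 0 :=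
    fun x hx => theta_flat θ hθsupp hθone hx
  have hsupp1 : ∀ x ∉ Set.Icc (0:ℝ) 1, deriv θ x = 0 := by
    intro x hx
    simp only [Set.mem_Icc, not_and_or, not_le] at hx
    exact (hflat x hx).1
  have hsupp2 : ∀ x ∉ Set.Icc (0:ℝ) 1, deriv (deriv θ) x = 0 := by
    intro x hx
    simp only [Set.mem_Icc, not_and_or, not_le] at hx
    exact (hflat x hx).2
  obtain ⟨Mθ1, hMθ1⟩ := (HasCompactSupport.intro isCompact_Icc hsupp1).exists_bound_of_continuous
    hθ'd.continuous
  obtain ⟨Mθ2, hMθ2⟩ := (HasCompactSupport.intro isCompact_Icc hsupp2).exists_bound_of_continuous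
    hθ''c
  obtain ⟨M1, hM1⟩ := (hβc.fderiv ℝ).exists_bound_of_continuous hβ'd.continuous
  obtain ⟨M2, hM2⟩ : ∃ C, ∀ x, ‖fderiv ℝ (fderiv ℝ β) x‖ ≤ C :=
    HasCompactSupport.exists_bound_of_continuous (E := E4 →L[ℝ] E4 →L[ℝ] ℝ) (α := E4)
      ((hβc.fderiv ℝ).fderiv ℝ) hβ''c
  have hMθ1nn : 0 ≤ Mθ1 := le_trans (norm_nonneg _) (hMθ1 0)
  have hMθ2nn : 0 ≤ Mθ2 := le_trans (norm_nonneg _) (hMθ2 0)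
  have hM1nn : 0 ≤ M1 := le_trans (norm_nonneg _) (hM1 0)
  have hM2nn : 0 ≤ M2 := le_trans (ContinuousLinearMap.opNorm_nonneg _) (hM2 0)
  -- geometric constants
  set K : ℝ := Real.sqrt (1 + ∑ i : Fin 3, nv i ^ 2) with hKdef
  have hK0 : 0 ≤ K := Real.sqrt_nonneg _
  set C0 : ℝ := K + ∑ i : Fin 3, |nv i| with hC0def
  have hC00 : 0 ≤ C0 := add_nonneg hK0 (Finset.sum_nonneg fun i _ => abs_nonneg _)
  have hKC0 : K ≤ C0 := le_add_of_nonneg_right (Finset.sum_nonneg fun i _ => abs_nonneg _)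
  set c1 : ℝ := Mθ1 + C0^2 * M1 with hc1def
  set c2 : ℝ := 3*K*Mθ1 + K*Mθ2 + Mθ1*M1 + 2*C0*K*M1 + K*Mθ1*M1 + C0^2*(M2+M1) with hc2def
  have hc1nn : 0 ≤ c1 := by positivity
  have hc2nn : 0 ≤ c2 := by positivity
  refine ⟨c1 + c2, ?_⟩
  intro σ hσ r hr p
  have hr0 : (0:ℝ) < r := lt_of_lt_of_le one_pos hr
  have hrne : r ≠ 0 := ne_of_gt hr0
  set R : ℝ := r⁻¹ with hRdef
  have hR0 : 0 < R := inv_pos.mpr hr0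
  have hR1 : R ≤ 1 := by rw [hRdef]; exact inv_le_one_of_one_le₀ hr
  have hiR : (r^2)⁻¹ = R^2 := (inv_pow r 2).symm
  set X : ℝ := 1 + ‖p‖^3 with hXdef
  obtain ⟨hpX, hp2X, hp3X⟩ := pow_le_aux (norm_nonneg p)
  have hX1 : (1:ℝ) ≤ X := by
    have h3 : (0:ℝ) ≤ ‖p‖^3 := by positivity
    rw [hXdef]; linarith
  have hXnn : (0:ℝ) ≤ X := le_trans zero_le_one hX1
  have habsσ : |σ| = 1 := by rcases hσ with h | h <;> rw [h] <;> norm_num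
  set N : ℝ := nPair nv p with hNdef
  set A : ℝ := σ * (r * N) with hAdef
  have hANabs : |A| = r * |N| := by
    rw [hAdef, abs_mul, abs_mul, habsσ, one_mul, abs_of_pos hr0]
  -- small-|N| facts on the supports of θ', θ''
  have hsmall : |A| ≤ 1 → |N| ≤ R := by
    intro h
    rw [hANabs] at h
    calc |N| = R * (r * |N|) := by rw [hRdef, inv_mul_cancel_left₀ hrne]
      _ ≤ R * 1 := mul_le_mul_of_nonneg_left h hR0.le
      _ = R := mul_one R
  have hsm1 : deriv θ A ≠ 0 → |N| ≤ R := by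
    intro h
    refine hsmall (abs_le.mpr ⟨?_, ?_⟩) <;> by_contra hc <;> push_neg at hc
    · exact h (hflat _ (Or.inl (by linarith))).1
    · exact h (hflat _ (Or.inr hc)).1
  have hsm2 : deriv (deriv θ) A ≠ 0 → |N| ≤ R := by
    intro h
    refine hsmall (abs_le.mpr ⟨?_, ?_⟩) <;> by_contra hc <;> push_neg at hc
    · exact h (hflat _ (Or.inl (by linarith))).2
    · exact h (hflat _ (Or.inr hc)).2
  have hk : ∀ k : ℕ, |N|^k * |deriv θ A| ≤ R^k * Mθ1 := by
    intro k
    by_cases h : deriv θ A = 0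
    · rw [h, abs_zero, mul_zero]; positivity
    · exact mul_le_mul (pow_le_pow_left₀ (abs_nonneg _) (hsm1 h) k)
        (by simpa using hMθ1 A) (abs_nonneg _) (by positivity)
  have hk'' : ∀ k : ℕ, |N|^k * |deriv (deriv θ) A| ≤ R^k * Mθ2 := by
    intro k
    by_cases h : deriv (deriv θ) A = 0
    · rw [h, abs_zero, mul_zero]; positivity
    · exact mul_le_mul (pow_le_pow_left₀ (abs_nonneg _) (hsm2 h) k)
        (by simpa using hMθ2 A) (abs_nonneg _) (by positivity)
  have hNb : |N| ≤ C0 * ‖p‖ := nPair_bound nv p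
  set q : E4 := r⁻¹ • p with hqdef
  have hbq : |β q| ≤ 1 := abs_le.mpr ⟨by linarith [(hβ01 q).1], (hβ01 q).2⟩
  have hthA : |θ A| ≤ 1 := abs_le.mpr ⟨by linarith [(hθ01 A).1], (hθ01 A).2⟩
  have hDb : ∀ v : E4, |fderiv ℝ β q v| ≤ M1 * ‖v‖ := fun v => by
    rw [← Real.norm_eq_abs]
    exact le_trans ((fderiv ℝ β q).le_opNorm v)
      (mul_le_mul_of_nonneg_right (hM1 q) (norm_nonneg v))
  have hD2 : ∀ v w : E4, |(fderiv ℝ (fderiv ℝ β) q v) w| ≤ M2 * ‖v‖ * ‖w‖ := fun v w => by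
    rw [← Real.norm_eq_abs]
    calc ‖(fderiv ℝ (fderiv ℝ β) q v) w‖ ≤ ‖fderiv ℝ (fderiv ℝ β) q v‖ * ‖w‖ :=
          (fderiv ℝ (fderiv ℝ β) q v).le_opNorm w
      _ ≤ (‖fderiv ℝ (fderiv ℝ β) q‖ * ‖v‖) * ‖w‖ :=
          mul_le_mul_of_nonneg_right ((fderiv ℝ (fderiv ℝ β) q).le_opNorm v) (norm_nonneg w)
      _ ≤ M2 * ‖v‖ * ‖w‖ := by
          have := hM2 q
          gcongr
  set e : E4 := EuclideanSpace.single 0 1 with hedef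
  have hnorme : ‖e‖ = 1 := by rw [hedef, EuclideanSpace.norm_single]; norm_num
  have hnormRe : ‖r⁻¹ • e‖ = R := by
    rw [norm_smul, hnorme, mul_one, Real.norm_eq_abs, abs_of_pos (inv_pos.mpr hr0), hRdef]
  have hcr : (c1 + c2) / r^2 * X = (c1 + c2) * (R^2 * X) := by
    rw [div_eq_mul_inv, hiR]; ring
  have hRr : R * r = 1 := by rw [hRdef]; exact inv_mul_cancel₀ hrne
  have hR2nn : (0:ℝ) ≤ R^2 := pow_nonneg hR0.le 2
  have hR32 : R^3 ≤ R^2 := pow_le_pow_of_le_one hR0.le hR1 (by norm_num)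
  have hDbp : |fderiv ℝ β q p| ≤ M1 * ‖p‖ := hDb p
  have hDbe : |fderiv ℝ β q e| ≤ M1 := by simpa [hnorme] using hDb e
  have hDbre : |fderiv ℝ β q (r⁻¹ • e)| ≤ M1 * R := by simpa [hnormRe] using hDb (r⁻¹ • e)
  have hD2ep : |(fderiv ℝ (fderiv ℝ β) q (r⁻¹ • e)) p| ≤ M2 * R * ‖p‖ := by
    simpa [hnormRe] using hD2 (r⁻¹ • e) p
  constructor
  · rw [Gfun_eq θ hθd β hβd nv σ r hrne p, ← hNdef, ← hqdef, ← hAdef, hcr]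
    have hb1 : |σ * N^3 * deriv θ A * β q| ≤ Mθ1 * (R^2 * X) := by
      have e1 : |σ * N^3 * deriv θ A * β q| = |N|^3 * |deriv θ A| * |β q| := by
        rw [abs_mul, abs_mul, abs_mul, habsσ, one_mul, abs_pow]
      rw [e1]
      calc |N|^3 * |deriv θ A| * |β q| ≤ (R^3 * Mθ1) * 1 :=
            mul_le_mul (hk 3) hbq (abs_nonneg _)
              (mul_nonneg (pow_nonneg hR0.le 3) hMθ1nn)
        _ = R^3 * Mθ1 := mul_one _
        _ ≤ R^2 * Mθ1 := mul_le_mul_of_nonneg_right hR32 hMθ1nn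
        _ ≤ R^2 * Mθ1 * X := le_mul_of_one_le_right (mul_nonneg hR2nn hMθ1nn) hX1
        _ = Mθ1 * (R^2 * X) := by ring
    have hb2 : |(r^2)⁻¹ * (N^2 * (θ A * fderiv ℝ β q p))| ≤ (C0^2 * M1) * (R^2 * X) := by
      have e1 : |(r^2)⁻¹ * (N^2 * (θ A * fderiv ℝ β q p))|
          = R^2 * (|N|^2 * (|θ A| * |fderiv ℝ β q p|)) := by
        rw [abs_mul, abs_mul, abs_mul, abs_pow,
          abs_of_pos (inv_pos.mpr (pow_pos hr0 2)), hiR]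
      rw [e1]
      calc R^2 * (|N|^2 * (|θ A| * |fderiv ℝ β q p|))
          ≤ R^2 * ((C0 * ‖p‖)^2 * (1 * (M1 * ‖p‖))) := by
            refine mul_le_mul_of_nonneg_left ?_ hR2nn
            refine mul_le_mul (pow_le_pow_left₀ (abs_nonneg _) hNb 2)
              (mul_le_mul hthA hDbp (abs_nonneg _) zero_le_one)
              (mul_nonneg (abs_nonneg _) (abs_nonneg _)) (by positivity)
        _ = (C0^2 * M1) * (R^2 * ‖p‖^3) := by ring
        _ ≤ (C0^2 * M1) * (R^2 * X) := by
            refine mul_le_mul_of_nonneg_left ?_ (mul_nonneg (pow_nonneg hC00 2) hM1nn)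
            exact mul_le_mul_of_nonneg_left hp3X hR2nn
    calc |σ * N^3 * deriv θ A * β q - (r^2)⁻¹ * (N^2 * (θ A * fderiv ℝ β q p))|
        ≤ |σ * N^3 * deriv θ A * β q| + |(r^2)⁻¹ * (N^2 * (θ A * fderiv ℝ β q p))| :=
          abs_sub _ _
      _ ≤ Mθ1 * (R^2 * X) + (C0^2 * M1) * (R^2 * X) := add_le_add hb1 hb2
      _ = c1 * (R^2 * X) := by rw [hc1def]; ring
      _ ≤ (c1 + c2) * (R^2 * X) :=
          mul_le_mul_of_nonneg_right (le_add_of_nonneg_right hc2nn)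
            (mul_nonneg hR2nn hXnn)
  · -- derivative in the p⁰ direction
    have hfun : (fun s : ℝ => Gfun θ β nv σ r (p + s • e)) = fun s : ℝ =>
        σ * (N + s * K)^3 * deriv θ (σ * (r * (N + s * K))) * β (r⁻¹ • (p + s • e))
        - (r^2)⁻¹ * ((N + s * K)^2 * (θ (σ * (r * (N + s * K)))
            * fderiv ℝ β (r⁻¹ • (p + s • e)) (p + s • e))) := by
      funext s
      rw [hedef, Gfun_eq θ hθd β hβd nv σ r hrne, nPair_shift, ← hNdef, ← hKdef]
    have hNs : HasDerivAt (fun s : ℝ => N + s * K) K 0 := by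
      simpa using ((hasDerivAt_id (0:ℝ)).mul_const K).const_add N
    have hA' : HasDerivAt (fun s : ℝ => σ * (r * (N + s * K))) (σ * (r * K)) 0 :=
      (hNs.const_mul r).const_mul σ
    have hth : HasDerivAt (fun s : ℝ => θ (σ * (r * (N + s * K))))
        (deriv θ (σ * (r * N)) * (σ * (r * K))) 0 := by
      have h := ((hθd (σ * (r * (N + (0:ℝ) * K)))).hasDerivAt).comp 0 hA'
      simpa [Function.comp_def] using h
    have hthd : HasDerivAt (fun s : ℝ => deriv θ (σ * (r * (N + s * K))))
        (deriv (deriv θ) (σ * (r * N)) * (σ * (r * K))) 0 := by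
      have h := ((hθ'd (σ * (r * (N + (0:ℝ) * K)))).hasDerivAt).comp 0 hA'
      simpa [Function.comp_def] using h
    have hps : HasDerivAt (fun s : ℝ => p + s • e) e 0 := by
      simpa using ((hasDerivAt_id (0:ℝ)).smul_const e).const_add p
    have hqs : HasDerivAt (fun s : ℝ => r⁻¹ • (p + s • e)) (r⁻¹ • e) 0 :=
      hps.const_smul r⁻¹
    have hbd : HasDerivAt (fun s : ℝ => β (r⁻¹ • (p + s • e)))
        (fderiv ℝ β (r⁻¹ • p) (r⁻¹ • e)) 0 := by
      have h := ((hβd (r⁻¹ • (p + (0:ℝ) • e))).hasFDerivAt).comp_hasDerivAt 0 hqs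
      simpa [Function.comp_def] using h
    have hDbd : HasDerivAt (fun s : ℝ => fderiv ℝ β (r⁻¹ • (p + s • e)))
        (fderiv ℝ (fderiv ℝ β) (r⁻¹ • p) (r⁻¹ • e)) 0 := by
      have h := ((hβ'd (r⁻¹ • (p + (0:ℝ) • e))).hasFDerivAt).comp_hasDerivAt 0 hqs
      simpa [Function.comp_def] using h
    have happ : HasDerivAt (fun s : ℝ => fderiv ℝ β (r⁻¹ • (p + s • e)) (p + s • e))
        ((fderiv ℝ (fderiv ℝ β) (r⁻¹ • p) (r⁻¹ • e)) p + fderiv ℝ β (r⁻¹ • p) e) 0 := by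
      have h := hDbd.clm_apply hps
      simpa using h
    have hT1 := (((hNs.pow 3).const_mul σ).mul hthd).mul hbd
    have hT2 := ((hNs.pow 2).mul (hth.mul happ)).const_mul ((r^2)⁻¹)
    have hD : HasDerivAt (fun s : ℝ =>
        σ * (N + s * K)^3 * deriv θ (σ * (r * (N + s * K))) * β (r⁻¹ • (p + s • e))
        - (r^2)⁻¹ * ((N + s * K)^2 * (θ (σ * (r * (N + s * K)))
            * fderiv ℝ β (r⁻¹ • (p + s • e)) (p + s • e))))
        (σ * (3 * N^2 * K) * deriv θ (σ * (r * N)) * β (r⁻¹ • p)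
         + σ * N^3 * (deriv (deriv θ) (σ * (r * N)) * (σ * (r * K))) * β (r⁻¹ • p)
         + σ * N^3 * deriv θ (σ * (r * N)) * fderiv ℝ β (r⁻¹ • p) (r⁻¹ • e)
         - ((r^2)⁻¹ * ((2 * N * K) * (θ (σ * (r * N)) * fderiv ℝ β (r⁻¹ • p) p))
            + (r^2)⁻¹ * (N^2 * ((deriv θ (σ * (r * N)) * (σ * (r * K)))
                * fderiv ℝ β (r⁻¹ • p) p))
            + (r^2)⁻¹ * (N^2 * (θ (σ * (r * N))
                * ((fderiv ℝ (fderiv ℝ β) (r⁻¹ • p) (r⁻¹ • e)) p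
                    + fderiv ℝ β (r⁻¹ • p) e))))) 0 := by
      have h := hT1.sub hT2
      simp only [Pi.mul_def, Pi.pow_def, Pi.sub_def, zero_mul, add_zero, zero_smul, Nat.cast_ofNat,
        Nat.reduceSub, pow_one] at h
      refine h.congr_deriv ?_
      ring
    rw [hfun, hD.deriv, hcr, ← hqdef, ← hAdef]
    have hU1 : |σ * (3 * N^2 * K) * deriv θ A * β q| ≤ (3 * K * Mθ1) * (R^2 * X) := by
      have e1 : |σ * (3 * N^2 * K) * deriv θ A * β q|
          = 3 * K * ((|N|^2 * |deriv θ A|) * |β q|) := by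
        simp only [abs_mul, abs_pow, habsσ, abs_of_nonneg hK0]
        norm_num
        ring
      rw [e1]
      calc 3 * K * ((|N|^2 * |deriv θ A|) * |β q|)
          ≤ 3 * K * ((R^2 * Mθ1) * 1) := by
            refine mul_le_mul_of_nonneg_left ?_ (by linarith)
            exact mul_le_mul (hk 2) hbq (abs_nonneg _) (mul_nonneg hR2nn hMθ1nn)
        _ = (3 * K * Mθ1) * R^2 := by ring
        _ ≤ (3 * K * Mθ1) * (R^2 * X) := by
            rw [← mul_assoc ((3:ℝ) * K * Mθ1) (R^2) X]
            exact le_mul_of_one_le_right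
              (mul_nonneg (mul_nonneg (by linarith : (0:ℝ) ≤ 3 * K) hMθ1nn) hR2nn) hX1
    have hU2 : |σ * N^3 * (deriv (deriv θ) A * (σ * (r * K))) * β q|
        ≤ (K * Mθ2) * (R^2 * X) := by
      have e2 : |σ * N^3 * (deriv (deriv θ) A * (σ * (r * K))) * β q|
          = (|N|^3 * |deriv (deriv θ) A|) * (r * (K * |β q|)) := by
        simp only [abs_mul, abs_pow, habsσ, abs_of_nonneg hK0, abs_of_pos hr0]
        ring
      rw [e2]
      calc (|N|^3 * |deriv (deriv θ) A|) * (r * (K * |β q|))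
          ≤ (R^3 * Mθ2) * (r * (K * 1)) :=
            mul_le_mul (hk'' 3)
              (mul_le_mul_of_nonneg_left (mul_le_mul_of_nonneg_left hbq hK0) hr0.le)
              (mul_nonneg hr0.le (mul_nonneg hK0 (abs_nonneg _)))
              (mul_nonneg (pow_nonneg hR0.le 3) hMθ2nn)
        _ = (K * Mθ2) * R^2 * (R * r) := by ring
        _ = (K * Mθ2) * R^2 := by rw [hRr, mul_one]
        _ ≤ (K * Mθ2) * R^2 * X :=
            le_mul_of_one_le_right (mul_nonneg (mul_nonneg hK0 hMθ2nn) hR2nn) hX1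
        _ = (K * Mθ2) * (R^2 * X) := by ring
    have hU3 : |σ * N^3 * deriv θ A * (fderiv ℝ β q) (r⁻¹ • e)|
        ≤ (Mθ1 * M1) * (R^2 * X) := by
      have e3 : |σ * N^3 * deriv θ A * (fderiv ℝ β q) (r⁻¹ • e)|
          = (|N|^3 * |deriv θ A|) * |(fderiv ℝ β q) (r⁻¹ • e)| := by
        simp only [abs_mul, abs_pow, habsσ]
        ring
      rw [e3]
      calc (|N|^3 * |deriv θ A|) * |(fderiv ℝ β q) (r⁻¹ • e)|
          ≤ (R^3 * Mθ1) * (M1 * R) :=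
            mul_le_mul (hk 3) hDbre (abs_nonneg _)
              (mul_nonneg (pow_nonneg hR0.le 3) hMθ1nn)
        _ = (Mθ1 * M1) * R^4 := by ring
        _ ≤ (Mθ1 * M1) * R^2 :=
            mul_le_mul_of_nonneg_left
              (pow_le_pow_of_le_one hR0.le hR1 (by norm_num)) (mul_nonneg hMθ1nn hM1nn)
        _ ≤ (Mθ1 * M1) * R^2 * X :=
            le_mul_of_one_le_right (mul_nonneg (mul_nonneg hMθ1nn hM1nn) hR2nn) hX1
        _ = (Mθ1 * M1) * (R^2 * X) := by ring
    have hV4 : |(r^2)⁻¹ * ((2 * N * K) * (θ A * (fderiv ℝ β q) p))|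
        ≤ (2 * C0 * K * M1) * (R^2 * X) := by
      have e4 : |(r^2)⁻¹ * ((2 * N * K) * (θ A * (fderiv ℝ β q) p))|
          = R^2 * (2 * (|N| * (K * (|θ A| * |(fderiv ℝ β q) p|)))) := by
        simp only [abs_mul, abs_inv, abs_pow, abs_of_pos hr0, abs_of_nonneg hK0, abs_two]
        rw [hiR]
        ring
      rw [e4]
      have inner1 : |θ A| * |(fderiv ℝ β q) p| ≤ 1 * (M1 * ‖p‖) :=
        mul_le_mul hthA hDbp (abs_nonneg _) zero_le_one
      have inner2 : K * (|θ A| * |(fderiv ℝ β q) p|) ≤ K * (1 * (M1 * ‖p‖)) :=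
        mul_le_mul_of_nonneg_left inner1 hK0
      have inner3 : |N| * (K * (|θ A| * |(fderiv ℝ β q) p|))
          ≤ (C0 * ‖p‖) * (K * (1 * (M1 * ‖p‖))) :=
        mul_le_mul hNb inner2
          (mul_nonneg hK0 (mul_nonneg (abs_nonneg _) (abs_nonneg _)))
          (mul_nonneg hC00 (norm_nonneg _))
      calc R^2 * (2 * (|N| * (K * (|θ A| * |(fderiv ℝ β q) p|))))
          ≤ R^2 * (2 * ((C0 * ‖p‖) * (K * (1 * (M1 * ‖p‖))))) :=
            mul_le_mul_of_nonneg_left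
              (mul_le_mul_of_nonneg_left inner3 (by norm_num)) hR2nn
        _ = (2 * C0 * K * M1) * (R^2 * ‖p‖^2) := by ring
        _ ≤ (2 * C0 * K * M1) * (R^2 * X) := by
            refine mul_le_mul_of_nonneg_left
              (mul_le_mul_of_nonneg_left hp2X hR2nn) ?_
            have h2 : (0:ℝ) ≤ 2 := by norm_num
            exact mul_nonneg (mul_nonneg (mul_nonneg h2 hC00) hK0) hM1nn
    have hV5 : |(r^2)⁻¹ * (N^2 * ((deriv θ A * (σ * (r * K))) * (fderiv ℝ β q) p))|
        ≤ (K * Mθ1 * M1) * (R^2 * X) := by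
      have e5 : |(r^2)⁻¹ * (N^2 * ((deriv θ A * (σ * (r * K))) * (fderiv ℝ β q) p))|
          = R^2 * ((|N|^2 * |deriv θ A|) * (r * (K * |(fderiv ℝ β q) p|))) := by
        simp only [abs_mul, abs_inv, abs_pow, abs_of_pos hr0, abs_of_nonneg hK0, habsσ]
        rw [hiR]
        ring
      rw [e5]
      calc R^2 * ((|N|^2 * |deriv θ A|) * (r * (K * |(fderiv ℝ β q) p|)))
          ≤ R^2 * ((R^2 * Mθ1) * (r * (K * (M1 * ‖p‖)))) := by
            refine mul_le_mul_of_nonneg_left ?_ hR2nn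
            exact mul_le_mul (hk 2)
              (mul_le_mul_of_nonneg_left (mul_le_mul_of_nonneg_left hDbp hK0) hr0.le)
              (mul_nonneg hr0.le (mul_nonneg hK0 (abs_nonneg _)))
              (mul_nonneg hR2nn hMθ1nn)
        _ = (K * Mθ1 * M1) * ((R^2 * (R * r)) * (R * ‖p‖)) := by ring
        _ = (K * Mθ1 * M1) * (R^2 * (R * ‖p‖)) := by rw [hRr, mul_one]
        _ ≤ (K * Mθ1 * M1) * (R^2 * (1 * X)) := by
            refine mul_le_mul_of_nonneg_left
              (mul_le_mul_of_nonneg_left ?_ hR2nn)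
              (mul_nonneg (mul_nonneg hK0 hMθ1nn) hM1nn)
            exact mul_le_mul hR1 hpX (norm_nonneg p) zero_le_one
        _ = (K * Mθ1 * M1) * (R^2 * X) := by rw [one_mul]
    have hV6 : |(r^2)⁻¹ * (N^2 * (θ A
          * (((fderiv ℝ (fderiv ℝ β) q) (r⁻¹ • e)) p + (fderiv ℝ β q) e)))|
        ≤ (C0^2 * (M2 + M1)) * (R^2 * X) := by
      have e6 : |(r^2)⁻¹ * (N^2 * (θ A
            * (((fderiv ℝ (fderiv ℝ β) q) (r⁻¹ • e)) p + (fderiv ℝ β q) e)))|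
          = R^2 * (|N|^2 * (|θ A|
              * |((fderiv ℝ (fderiv ℝ β) q) (r⁻¹ • e)) p + (fderiv ℝ β q) e|)) := by
        simp only [abs_mul, abs_inv, abs_pow, abs_of_pos hr0]
        rw [hiR]
        try ring
      rw [e6]
      have hsum : |((fderiv ℝ (fderiv ℝ β) q) (r⁻¹ • e)) p + (fderiv ℝ β q) e|
          ≤ M2 * ‖p‖ + M1 := by
        refine (abs_add_le _ _).trans (add_le_add (hD2ep.trans ?_) hDbe)
        have h := mul_le_mul_of_nonneg_right
          (mul_le_mul_of_nonneg_left hR1 hM2nn) (norm_nonneg p)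
        simpa using h
      calc R^2 * (|N|^2 * (|θ A|
            * |((fderiv ℝ (fderiv ℝ β) q) (r⁻¹ • e)) p + (fderiv ℝ β q) e|))
          ≤ R^2 * ((C0 * ‖p‖)^2 * (1 * (M2 * ‖p‖ + M1))) := by
            refine mul_le_mul_of_nonneg_left ?_ hR2nn
            refine mul_le_mul (pow_le_pow_left₀ (abs_nonneg _) hNb 2)
              (mul_le_mul hthA hsum (abs_nonneg _) zero_le_one)
              (mul_nonneg (abs_nonneg _) (abs_nonneg _)) (by positivity)
        _ = C0^2 * (R^2 * (M2 * ‖p‖^3 + M1 * ‖p‖^2)) := by ring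
        _ ≤ C0^2 * (R^2 * (M2 * X + M1 * X)) := by
            refine mul_le_mul_of_nonneg_left
              (mul_le_mul_of_nonneg_left ?_ hR2nn) (pow_nonneg hC00 2)
            exact add_le_add (mul_le_mul_of_nonneg_left hp3X hM2nn)
              (mul_le_mul_of_nonneg_left hp2X hM1nn)
        _ = (C0^2 * (M2 + M1)) * (R^2 * X) := by ring
    refine le_trans (abs_sub _ _) ?_
    refine le_trans (add_le_add (abs_add_three _ _ _) (abs_add_three _ _ _)) ?_
    calc (|σ * (3 * N^2 * K) * deriv θ A * β q|
          + |σ * N^3 * (deriv (deriv θ) A * (σ * (r * K))) * β q|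
          + |σ * N^3 * deriv θ A * (fderiv ℝ β q) (r⁻¹ • e)|)
        + (|(r^2)⁻¹ * ((2 * N * K) * (θ A * (fderiv ℝ β q) p))|
          + |(r^2)⁻¹ * (N^2 * ((deriv θ A * (σ * (r * K))) * (fderiv ℝ β q) p))|
          + |(r^2)⁻¹ * (N^2 * (θ A
              * (((fderiv ℝ (fderiv ℝ β) q) (r⁻¹ • e)) p + (fderiv ℝ β q) e)))|)
        ≤ ((3 * K * Mθ1) * (R^2 * X) + (K * Mθ2) * (R^2 * X) + (Mθ1 * M1) * (R^2 * X))
          + ((2 * C0 * K * M1) * (R^2 * X) + (K * Mθ1 * M1) * (R^2 * X)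
            + (C0^2 * (M2 + M1)) * (R^2 * X)) :=
          add_le_add (add_le_add (add_le_add hU1 hU2) hU3)
            (add_le_add (add_le_add hV4 hV5) hV6)
      _ = c2 * (R^2 * X) := by rw [hc2def]; ring
      _ ≤ (c1 + c2) * (R^2 * X) :=
          mul_le_mul_of_nonneg_right (le_add_of_nonneg_left hc1nn)
            (mul_nonneg hR2nn hXnn)


end
end
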